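/- arXiv:1502.01306 — 9 statements merged into one kernel-verified Lean document; each statement's English description precedes it below -/
import Mathlib

section
/- Let d ≥ 3, ℓ ≥ 6, L ≥ 1, N ≥ 1 be integers. If γ is a *-connected path in ℤ^d such that {γ} ∩ S(L_N − 1) ≠ ∅ and {γ} ∩ S(2·L_N) ≠ ∅, then there exists a proper embedding 𝒯 ∈ Λ_N such that for every leaf m ∈ T_(N) one has {γ} ∩ S(𝒯(m), L_0 − 1) ≠ ∅ and {γ} ∩ S(𝒯(m), 2·L_0) ≠ ∅ (where L_0 = L). -/
/-- The ℓ∞ norm of a point of ℤ^d. -/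
def normInf {d : ℕ} (x : Fin d → ℤ) : ℤ :=
  ((Finset.univ.sup fun i => (x i).natAbs : ℕ) : ℤ)

/-- A proper embedding of the binary tree of height `N` into ℤ^d, with scales
`L_k = L·ℓ^k` and renormalized lattices `𝓛_k = L_k·ℤ^d`. Tree vertices are encoded
as lists over `Fin 2` (only lists of length ≤ N are relevant):
(1) the root is mapped to 0; (2) a vertex at depth `k ≤ N` is mapped into `𝓛_{N-k}`;
(3) for a vertex `m` at depth `k < N`, its first child is at `ℓ∞`-distance `L_{N-k}`
from `m` and its second child at distance `2·L_{N-k}`. -/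
def IsProperEmbedding (d ℓ L N : ℕ) (T : List (Fin 2) → (Fin d → ℤ)) : Prop :=
  T [] = 0 ∧
  (∀ l : List (Fin 2), l.length ≤ N → ∀ i : Fin d,
    ((L : ℤ) * (ℓ : ℤ) ^ (N - l.length)) ∣ T l i) ∧
  (∀ l : List (Fin 2), l.length < N →
    normInf (T (l ++ [0]) - T l) = (L : ℤ) * (ℓ : ℤ) ^ (N - l.length) ∧
    normInf (T (l ++ [1]) - T l) = 2 * ((L : ℤ) * (ℓ : ℤ) ^ (N - l.length)))

/-!
Call `x ∈ Rℤ^d` a crossed centre at scale `R` if the path meets both `S(x, R - 1)` and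
`S(x, 2R)`. The tree is embedded from the root down, one scale at a time. Along the path,
`|γ(i) - x|` changes by at most `1` per step, so a discrete intermediate value theorem applies.
Given a crossed centre `x` at scale `Rℓ`, the path therefore passes through `S(x, Rℓ)` and
`S(x, 2Rℓ)`. Rounding such a path point to `Rℤ^d` gives a centre `y` at distance `Rℓ`, resp.
`2Rℓ`, from `x` with a path point within `R - 1` of `y`, while the other sphere stays at distance
at least `Rℓ ≥ 2R` from `y`; by the intermediate value theorem again, `y` is a crossed centre at
scale `R`.
-/

section NormInf

variable {d : ℕ}

lemma normInf_nonneg (x : Fin d → ℤ) : 0 ≤ normInf x := Int.natCast_nonneg _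

lemma abs_apply_le_normInf (x : Fin d → ℤ) (i : Fin d) : |x i| ≤ normInf x := by
  rw [Int.abs_eq_natAbs, normInf, Nat.cast_le]
  exact Finset.le_sup (f := fun i => (x i).natAbs) (Finset.mem_univ i)

lemma normInf_le {x : Fin d → ℤ} {M : ℤ} (hM : 0 ≤ M) (h : ∀ i, |x i| ≤ M) :
    normInf x ≤ M := by
  have hsup : (Finset.univ.sup fun i => (x i).natAbs) ≤ M.toNat :=
    Finset.sup_le fun i _ => by have := h i; rw [Int.abs_eq_natAbs] at this; omega
  rw [normInf]
  omega

lemma normInf_add_le (u w : Fin d → ℤ) : normInf (u + w) ≤ normInf u + normInf w :=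
  normInf_le (add_nonneg (normInf_nonneg u) (normInf_nonneg w)) fun i =>
    (abs_add_le (u i) (w i)).trans
      (add_le_add (abs_apply_le_normInf u i) (abs_apply_le_normInf w i))

lemma normInf_neg (u : Fin d → ℤ) : normInf (-u) = normInf u := by
  simp only [normInf, Pi.neg_apply, Int.natAbs_neg]

lemma abs_normInf_sub_normInf_le (u w : Fin d → ℤ) :
    |normInf u - normInf w| ≤ normInf (u - w) := by
  have hu := normInf_add_le (u - w) w
  have hw := normInf_add_le (w - u) u
  rw [sub_add_cancel] at hu
  rw [sub_add_cancel, ← neg_sub, normInf_neg] at hw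
  exact abs_sub_le_iff.mpr ⟨by linarith, by linarith⟩

lemma dvd_normInf {x : Fin d → ℤ} {M : ℤ} (h : ∀ i, M ∣ x i) : M ∣ normInf x := by
  rw [normInf, Int.dvd_natCast]
  refine Finset.sup_induction (dvd_zero _) (fun a ha b hb => ?_) fun i _ => ?_
  · rcases le_total a b with hab | hab
    · rwa [sup_of_le_right hab]
    · rwa [sup_of_le_left hab]
  · exact Int.natAbs_dvd_natAbs.mpr (h i)

lemma exists_lattice_normInf_sub_le (z : Fin d → ℤ) {M : ℤ} (hM : 0 < M) :
    ∃ w : Fin d → ℤ, (∀ i, M ∣ w i) ∧ normInf (z - w) ≤ M - 1 := by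
  refine ⟨fun i => M * (z i / M), fun i => dvd_mul_right _ _, normInf_le (by omega) fun i => ?_⟩
  have h := Int.emod_def (z i) M
  have h0 := Int.emod_nonneg (z i) hM.ne'
  have h1 := Int.emod_lt_of_pos (z i) hM
  simp only [Pi.sub_apply, ← h, abs_of_nonneg h0]
  omega

end NormInf

lemma Int.exists_eq_of_le_of_le_of_le_add_one {f : ℕ → ℤ} {a b : ℕ} (hab : a ≤ b)
    (hf : ∀ i, a ≤ i → i < b → f (i + 1) ≤ f i + 1) {v : ℤ} (ha : f a ≤ v) (hb : v ≤ f b) :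
    ∃ t, a ≤ t ∧ t ≤ b ∧ f t = v := by
  induction b, hab using Nat.le_induction with
  | base => exact ⟨a, le_rfl, le_rfl, le_antisymm ha hb⟩
  | succ b hab ih =>
    by_cases hvb : v ≤ f b
    · obtain ⟨t, hat, htb, ht⟩ := ih (fun i hai hib => hf i hai (by omega)) hvb
      exact ⟨t, hat, by omega, ht⟩
    · have := hf b hab (by omega)
      exact ⟨b + 1, by omega, le_rfl, by omega⟩

lemma Int.exists_eq_of_abs_sub_le_one {f : ℕ → ℤ} {n : ℕ}
    (hf : ∀ i < n, |f (i + 1) - f i| ≤ 1) {a b : ℕ} (ha : a ≤ n) (hb : b ≤ n) {v : ℤ}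
    (hav : f a ≤ v) (hvb : v ≤ f b) : ∃ t ≤ n, f t = v := by
  rcases le_total a b with hab | hba
  · obtain ⟨t, -, htb, ht⟩ := Int.exists_eq_of_le_of_le_of_le_add_one hab
      (fun i _ hib => by have := abs_sub_le_iff.mp (hf i (by omega)); omega) hav hvb
    exact ⟨t, by omega, ht⟩
  · obtain ⟨t, -, hta, ht⟩ := Int.exists_eq_of_le_of_le_of_le_add_one (f := fun i => -f i) hba
      (fun i _ hia => by have := abs_sub_le_iff.mp (hf i (by omega)); omega)
      (neg_le_neg hvb) (neg_le_neg hav)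
    exact ⟨t, by omega, neg_inj.mp ht⟩

section Crossing

variable {d n : ℕ} {γ : ℕ → Fin d → ℤ}

def CrossesAnnulus (γ : ℕ → Fin d → ℤ) (n : ℕ) (x : Fin d → ℤ) (R : ℤ) : Prop :=
  (∃ i ≤ n, normInf (γ i - x) = R - 1) ∧ (∃ i ≤ n, normInf (γ i - x) = 2 * R)

def IsCrossedCenter (γ : ℕ → Fin d → ℤ) (n : ℕ) (R : ℤ) (x : Fin d → ℤ) : Prop :=
  (∀ i, R ∣ x i) ∧ CrossesAnnulus γ n x R

lemma abs_normInf_sub_succ_le_one (hγ : ∀ i < n, normInf (γ (i + 1) - γ i) ≤ 1)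
    (x : Fin d → ℤ) : ∀ i < n, |normInf (γ (i + 1) - x) - normInf (γ i - x)| ≤ 1 := fun i hi =>
  (abs_normInf_sub_normInf_le _ _).trans (by rw [sub_sub_sub_cancel_right]; exact hγ i hi)

lemma crossesAnnulus_of_near_of_far (hγ : ∀ i < n, normInf (γ (i + 1) - γ i) ≤ 1)
    {x : Fin d → ℤ} {R : ℤ} {t t' : ℕ} (ht : t ≤ n) (ht' : t' ≤ n)
    (hnear : normInf (γ t - x) ≤ R - 1) (hfar : 2 * R ≤ normInf (γ t' - x)) :
    CrossesAnnulus γ n x R := by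
  have hR := (normInf_nonneg (γ t - x)).trans hnear
  have hf := abs_normInf_sub_succ_le_one hγ x
  have hmid : R - 1 ≤ normInf (γ t' - x) := by linarith
  have hmid' : normInf (γ t - x) ≤ 2 * R := by linarith
  exact ⟨Int.exists_eq_of_abs_sub_le_one (f := fun t => normInf (γ t - x)) hf ht ht'
      hnear hmid,
    Int.exists_eq_of_abs_sub_le_one (f := fun t => normInf (γ t - x)) hf ht ht' hmid' hfar⟩

lemma exists_isCrossedCenter_of_normInf_eq (hγ : ∀ i < n, normInf (γ (i + 1) - γ i) ≤ 1)
    {M : ℤ} (hM : 0 < M) {x : Fin d → ℤ} (hx : ∀ i, M ∣ x i) {r : ℤ} {t t' : ℕ} (ht : t ≤ n)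
    (ht' : t' ≤ n) (hr : normInf (γ t - x) = M * r)
    (hfar : 2 * M ≤ |normInf (γ t' - x) - M * r|) :
    ∃ y, IsCrossedCenter γ n M y ∧ normInf (y - x) = M * r := by
  obtain ⟨w, hwM, hzw⟩ := exists_lattice_normInf_sub_le (γ t - x) hM
  -- `normInf w` is a multiple of `M` within `M - 1` of `M * r`.
  have hw : normInf w = M * r := by
    have hclose := abs_normInf_sub_normInf_le (γ t - x) w
    rw [hr, abs_sub_comm] at hclose
    exact sub_eq_zero.mp (Int.eq_zero_of_abs_lt_dvd
      (dvd_sub (dvd_normInf hwM) (dvd_mul_right M r)) (by linarith))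
  refine ⟨x + w, ⟨fun i => dvd_add (hx i) (hwM i), ?_⟩, by rwa [add_sub_cancel_left]⟩
  refine crossesAnnulus_of_near_of_far hγ ht ht' ?_ ?_
  · rwa [sub_add_eq_sub_sub]
  · have := abs_normInf_sub_normInf_le (γ t' - x) w
    rw [← sub_add_eq_sub_sub, hw] at this
    exact hfar.trans this

lemma exists_child (hγ : ∀ i < n, normInf (γ (i + 1) - γ i) ≤ 1) {R ℓ : ℤ} (hR : 0 < R)
    (hℓ : 2 ≤ ℓ) {x : Fin d → ℤ} (hx : IsCrossedCenter γ n (R * ℓ) x) (b : Fin 2) :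
    ∃ y, IsCrossedCenter γ n R y ∧ normInf (y - x) = (b.val + 1) * (R * ℓ) := by
  obtain ⟨hxRℓ, ⟨t₁, ht₁, hin⟩, ⟨t₂, ht₂, hout⟩⟩ := hx
  have hxR : ∀ i, R ∣ x i := fun i => (dvd_mul_right R ℓ).trans (hxRℓ i)
  have hRℓ : 2 * R ≤ R * ℓ := by nlinarith
  fin_cases b
  · obtain ⟨t, ht, hmid⟩ := Int.exists_eq_of_abs_sub_le_one
      (f := fun t => normInf (γ t - x)) (abs_normInf_sub_succ_le_one hγ x) ht₁ ht₂ (v := R * ℓ)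
      (by linarith) (by linarith)
    have hfar : 2 * R ≤ |normInf (γ t₂ - x) - R * ℓ| := by
      rw [hout, abs_of_nonneg (by linarith)]
      linarith
    simpa using exists_isCrossedCenter_of_normInf_eq hγ hR hxR ht ht₂ hmid hfar
  · have hfar : 2 * R ≤ |normInf (γ t₁ - x) - R * (2 * ℓ)| := by
      rw [hin, abs_of_nonpos (by linarith)]
      linarith
    obtain ⟨y, hy, hyx⟩ := exists_isCrossedCenter_of_normInf_eq hγ hR hxR ht₂ ht₁
      (by rw [hout]; ring) hfar
    exact ⟨y, hy, by rw [hyx]; push_cast; ring⟩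

lemma exists_child_map (hγ : ∀ i < n, normInf (γ (i + 1) - γ i) ≤ 1) {L ℓ : ℤ} (hL : 0 < L)
    (hℓ : 2 ≤ ℓ) :
    ∃ c : Fin 2 → ℕ → (Fin d → ℤ) → (Fin d → ℤ), ∀ b k x,
      IsCrossedCenter γ n (L * ℓ ^ (k + 1)) x →
        IsCrossedCenter γ n (L * ℓ ^ k) (c b k x) ∧
        normInf (c b k x - x) = (b.val + 1) * (L * ℓ ^ (k + 1)) := by
  have hchild : ∀ (b : Fin 2) k x, ∃ y, IsCrossedCenter γ n (L * ℓ ^ (k + 1)) x →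
      IsCrossedCenter γ n (L * ℓ ^ k) y ∧ normInf (y - x) = (b.val + 1) * (L * ℓ ^ (k + 1)) := by
    intro b k x
    by_cases hx : IsCrossedCenter γ n (L * ℓ ^ (k + 1)) x
    · rw [pow_succ, ← mul_assoc] at hx ⊢
      obtain ⟨y, hy⟩ := exists_child hγ (by positivity) hℓ hx b
      exact ⟨y, fun _ => hy⟩
    · exact ⟨x, fun h => absurd h hx⟩
  choose c hc using hchild
  exact ⟨c, hc⟩

end Crossing

section Tree

variable {α : Type*} (c : Fin 2 → ℕ → α → α) (N : ℕ) (root : α)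

/-- A vertex at depth `j` sits at scale `N - j`, and `c b k x` is the image of the `b`-th child,
at scale `k`, of a vertex mapped to `x`. -/
def treeOfChildren (l : List (Fin 2)) : α :=
  l.zipIdx.foldl (fun x p => c p.1 (N - p.2 - 1) x) root

lemma treeOfChildren_append_singleton (l : List (Fin 2)) (b : Fin 2) :
    treeOfChildren c N root (l ++ [b]) = c b (N - l.length - 1) (treeOfChildren c N root l) := by
  simp [treeOfChildren, List.zipIdx_append]

lemma treeOfChildren_induction (P : ℕ → α → Prop) (hc : ∀ b k x, P (k + 1) x → P k (c b k x))
    (hroot : P N root) (l : List (Fin 2)) (hl : l.length ≤ N) :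
    P (N - l.length) (treeOfChildren c N root l) := by
  induction l using List.reverseRecOn with
  | nil => exact hroot
  | append_singleton l b ih =>
    rw [List.length_append, List.length_singleton] at hl
    have hk : N - l.length - 1 + 1 = N - l.length := by omega
    rw [treeOfChildren_append_singleton, List.length_append, List.length_singleton,
      ← Nat.sub_sub]
    exact hc b _ _ (hk ▸ ih (by omega))

end Tree

theorem proper_embedding_from_crossing_general (d ℓ L N : ℕ)
    (hℓ : 6 ≤ ℓ) (hL : 1 ≤ L)
    (n : ℕ) (γ : ℕ → Fin d → ℤ)
    (hpath : ∀ i < n, normInf (γ (i + 1) - γ i) = 1)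
    (hin : ∃ i ≤ n, normInf (γ i) = (L : ℤ) * (ℓ : ℤ) ^ N - 1)
    (hout : ∃ i ≤ n, normInf (γ i) = 2 * ((L : ℤ) * (ℓ : ℤ) ^ N)) :
    ∃ T : List (Fin 2) → (Fin d → ℤ), IsProperEmbedding d ℓ L N T ∧
      ∀ l : List (Fin 2), l.length = N →
        (∃ i ≤ n, normInf (γ i - T l) = (L : ℤ) - 1) ∧
        (∃ i ≤ n, normInf (γ i - T l) = 2 * (L : ℤ)) := by
  obtain ⟨c, hc⟩ := exists_child_map (fun i hi => (hpath i hi).le)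
    (L := (L : ℤ)) (ℓ := (ℓ : ℤ)) (by omega) (by omega)
  have hroot : IsCrossedCenter γ n ((L : ℤ) * (ℓ : ℤ) ^ N) 0 :=
    ⟨fun _ => dvd_zero _, by simpa using hin, by simpa using hout⟩
  have hT := treeOfChildren_induction c N 0 _ (fun b k x hx => (hc b k x hx).1) hroot
  refine ⟨treeOfChildren c N 0, ⟨rfl, fun l hl => (hT l hl).1, fun l hl => ?_⟩, fun l hl => ?_⟩
  · have hk : N - l.length - 1 + 1 = N - l.length := by omega
    have hdist := fun b => (hc b (N - l.length - 1) _ (hk ▸ hT l hl.le)).2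
    simp only [hk, ← treeOfChildren_append_singleton] at hdist
    exact ⟨by simpa using hdist 0, by simpa using hdist 1⟩
  · simpa [hl, CrossesAnnulus] using (hT l hl.le).2

/-- If a *-connected path `γ(0), …, γ(n)` meets the sphere `S(L·ℓ^N − 1)` and the
sphere `S(2·L·ℓ^N)`, then there is a proper embedding `𝒯` of the binary tree of
height `N` such that for every leaf `m` (list of length `N`), the path meets both
spheres `S(𝒯(m), L − 1)` and `S(𝒯(m), 2L)`. -/
theorem proper_embedding_from_crossing (d ℓ L N : ℕ)
    (hd : 3 ≤ d) (hℓ : 6 ≤ ℓ) (hL : 1 ≤ L) (hN : 1 ≤ N)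
    (n : ℕ) (γ : ℕ → Fin d → ℤ)
    (hpath : ∀ i < n, normInf (γ (i + 1) - γ i) = 1)
    (hin : ∃ i ≤ n, normInf (γ i) = (L : ℤ) * (ℓ : ℤ) ^ N - 1)
    (hout : ∃ i ≤ n, normInf (γ i) = 2 * ((L : ℤ) * (ℓ : ℤ) ^ N)) :
    ∃ T : List (Fin 2) → (Fin d → ℤ), IsProperEmbedding d ℓ L N T ∧
      ∀ l : List (Fin 2), l.length = N →
        (∃ i ≤ n, normInf (γ i - T l) = (L : ℤ) - 1) ∧
        (∃ i ≤ n, normInf (γ i - T l) = 2 * (L : ℤ)) :=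
  proper_embedding_from_crossing_general d ℓ L N hℓ hL n γ hpath hin hout
end

section
/- Let V be a set, let 𝒳 ⊆ V, and let (x_i, y_i)_{i=1,…,n} be a finite sequence of pairs of elements of V. Define A_0 = A'_0 = 𝒳 and, for 1 ≤ i ≤ n: A_i = (A_{i−1} \ {x_i}) ∪ {y_i} if x_i ∈ A_{i−1}, and A_i = A_{i−1} otherwise (the coalescing update); A'_i = (A'_{i−1} \ {x_i}) Δ {y_i} if x_i ∈ A'_{i−1}, and A'_i = A'_{i−1} otherwise (the annihilating update), where Δ denotes symmetric difference. Then A'_i ⊆ A_i for every 0 ≤ i ≤ n. -/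
/-- Deterministic comparison of the coalescing and annihilating updates driven by the
same sequence of arrows `(x_i, y_i)`: starting from the same set `𝒳`, after each
step the annihilating system `A'` occupies a subset of the sites of the coalescing
system `A`. -/
theorem annihilating_subset_coalescing {V : Type*} (X : Set V) (n : ℕ)
    (x y : ℕ → V) (A A' : ℕ → Set V)
    (hA0 : A 0 = X) (hA'0 : A' 0 = X)
    (hA : ∀ i < n,
      (x i ∈ A i → A (i + 1) = (A i \ {x i}) ∪ {y i}) ∧
      (x i ∉ A i → A (i + 1) = A i))
    (hA' : ∀ i < n,
      (x i ∈ A' i → A' (i + 1) = symmDiff (A' i \ {x i}) {y i}) ∧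
      (x i ∉ A' i → A' (i + 1) = A' i)) :
    ∀ i ≤ n, A' i ⊆ A i := by
  intro i
  induction i with
  | zero => intro _; rw [hA0, hA'0]
  | succ i ih =>
    intro hin
    have hi : i < n := Nat.lt_of_succ_le hin
    have ihs : A' i ⊆ A i := ih (Nat.le_of_lt hi)
    by_cases hx' : x i ∈ A' i
    · have hx : x i ∈ A i := ihs hx'
      rw [(hA i hi).1 hx, (hA' i hi).1 hx']
      intro v hv
      rcases (Set.mem_symmDiff).1 hv with ⟨hv1, _⟩ | ⟨hv2, hv3⟩
      · exact Or.inl ⟨ihs hv1.1, hv1.2⟩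
      · exact Or.inr hv2
    · rw [(hA' i hi).2 hx']
      by_cases hx : x i ∈ A i
      · rw [(hA i hi).1 hx]
        intro v hv
        exact Or.inl ⟨ihs hv, fun h => hx' (h ▸ hv)⟩
      · rw [(hA i hi).2 hx]; exact ihs
end

section
/- Let (Ω, P) be a probability space, E a finite set, (η_e)_{e∈E} a family of {0,1}-valued random variables on Ω, and (q_e)_{e∈E} numbers in [0,1] such that for every subset S ⊆ E: P[η_e = 1 for all e ∈ S] ≤ ∏_{e∈S} q_e. Let (η*_e)_{e∈E} be a family of independent random variables on some probability space with P[η*_e = 1] = q_e and P[η*_e = 0] = 1 − q_e. Then for every integer k ≥ 0: E[(Σ_{e∈E} η_e)^k] ≤ E[(Σ_{e∈E} η*_e)^k]. -/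
/-!
Expanding `(∑ e, η e)^k` over words `f : Fin k → E` and using that a product of `{0,1}`-values
is the indicator that all of them equal `1`, the `k`-th moment becomes
`∑ f, P[η e = 1 for all e in the range of f]`. Negative correlation bounds each term by the
product of the `q e` over the range of `f`, and for the independent family this product is the
exact value of the corresponding term.
-/

open MeasureTheory ProbabilityTheory

lemma Finset.prod_eq_ite_forall_eq_one_of_zero_or_one {ι : Type*} (s : Finset ι) (x : ι → ℕ)
    (hx : ∀ i ∈ s, x i = 0 ∨ x i = 1) :
    ∏ i ∈ s, x i = if ∀ i ∈ s, x i = 1 then 1 else 0 := by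
  have hx_ite : ∀ i ∈ s, x i = if x i = 1 then 1 else 0 := by
    intro i hi
    rcases hx i hi with h | h <;> simp [h]
  rw [Finset.prod_congr rfl hx_ite, Finset.prod_ite_zero, Finset.prod_const_one]

section ZeroOneFamily

variable {Ω E : Type*} {η : E → Ω → ℕ}

lemma setOf_forall_eq_one_eq_biInter (S : Finset E) :
    {ω | ∀ e ∈ S, η e ω = 1} = ⋂ e ∈ S, η e ⁻¹' {1} := by
  ext ω
  simp

lemma measurableSet_setOf_forall_eq_one [MeasurableSpace Ω] (hη : ∀ e, Measurable (η e))
    (S : Finset E) : MeasurableSet {ω | ∀ e ∈ S, η e ω = 1} := by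
  rw [setOf_forall_eq_one_eq_biInter]
  exact .biInter S.countable_toSet fun e _ => hη e (measurableSet_singleton 1)

lemma sum_cast_pow_eq_sum_indicator [Fintype E] [DecidableEq E]
    (hη01 : ∀ e ω, η e ω = 0 ∨ η e ω = 1) (k : ℕ) (ω : Ω) :
    ((∑ e, η e ω : ℕ) : ℝ) ^ k =
      ∑ f : Fin k → E, {ω | ∀ e ∈ Finset.univ.image f, η e ω = 1}.indicator 1 ω := by
  push_cast
  rw [Fintype.sum_pow]
  refine Finset.sum_congr rfl fun f _ => ?_
  rw [← Nat.cast_prod, Finset.prod_eq_ite_forall_eq_one_of_zero_or_one _ _ fun i _ => hη01 _ ω,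
    Set.indicator_apply]
  simp only [Set.mem_ofPred_eq, Finset.forall_mem_image]
  split_ifs <;> simp

lemma integral_sum_pow_eq_sum_measureReal [MeasurableSpace Ω] [Fintype E] [DecidableEq E]
    (P : Measure Ω) [IsFiniteMeasure P] (hη : ∀ e, Measurable (η e))
    (hη01 : ∀ e ω, η e ω = 0 ∨ η e ω = 1) (k : ℕ) :
    ∫ ω, ((∑ e, η e ω : ℕ) : ℝ) ^ k ∂P =
      ∑ f : Fin k → E, P.real {ω | ∀ e ∈ Finset.univ.image f, η e ω = 1} := by
  simp only [sum_cast_pow_eq_sum_indicator hη01]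
  rw [integral_finsetSum _ fun f _ =>
    (integrable_const 1).indicator (measurableSet_setOf_forall_eq_one hη _)]
  exact Finset.sum_congr rfl fun f _ =>
    integral_indicator_one (measurableSet_setOf_forall_eq_one hη _)

lemma measure_setOf_forall_eq_one_of_iIndepFun [MeasurableSpace Ω] (P : Measure Ω)
    (hind : iIndepFun η P) (S : Finset E) :
    P {ω | ∀ e ∈ S, η e ω = 1} = ∏ e ∈ S, P {ω | η e ω = 1} := by
  rw [setOf_forall_eq_one_eq_biInter,
    hind.meas_biInter fun e _ => ⟨{1}, measurableSet_singleton 1, rfl⟩]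
  rfl

end ZeroOneFamily

theorem moments_le_of_neg_correlated_general
    {Ω Ω' : Type*} [MeasurableSpace Ω] [MeasurableSpace Ω']
    (P : Measure Ω) [IsProbabilityMeasure P]
    (P' : Measure Ω') [IsProbabilityMeasure P']
    {E : Type*} [Fintype E]
    (η : E → Ω → ℕ) (hηmeas : ∀ e, Measurable (η e))
    (hη01 : ∀ e ω, η e ω = 0 ∨ η e ω = 1)
    (q : E → ℝ) (hq : ∀ e, q e ∈ Set.Icc (0 : ℝ) 1)
    (hneg : ∀ S : Finset E,
      P {ω | ∀ e ∈ S, η e ω = 1} ≤ ENNReal.ofReal (∏ e ∈ S, q e))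
    (η' : E → Ω' → ℕ) (hη'meas : ∀ e, Measurable (η' e))
    (hη'01 : ∀ e ω, η' e ω = 0 ∨ η' e ω = 1)
    (hind : iIndepFun η' P')
    (hmarg1 : ∀ e, P' {ω | η' e ω = 1} = ENNReal.ofReal (q e)) :
    ∀ k : ℕ,
      ∫ ω, (((∑ e, η e ω : ℕ) : ℝ)) ^ k ∂P ≤
        ∫ ω, (((∑ e, η' e ω : ℕ) : ℝ)) ^ k ∂P' := by
  intro k
  classical
  rw [integral_sum_pow_eq_sum_measureReal P hηmeas hη01,
    integral_sum_pow_eq_sum_measureReal P' hη'meas hη'01]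
  gcongr with f
  set S := Finset.univ.image f
  have hprod_nonneg : 0 ≤ ∏ e ∈ S, q e := Finset.prod_nonneg fun e _ => (hq e).1
  calc P.real {ω | ∀ e ∈ S, η e ω = 1}
      ≤ ∏ e ∈ S, q e := ENNReal.toReal_le_of_le_ofReal hprod_nonneg (hneg S)
    _ = P'.real {ω | ∀ e ∈ S, η' e ω = 1} := by
      rw [measureReal_def, measure_setOf_forall_eq_one_of_iIndepFun P' hind, ENNReal.toReal_prod]
      exact Finset.prod_congr rfl fun e _ => by rw [hmarg1, ENNReal.toReal_ofReal (hq e).1]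

/-- If a finite family of `{0,1}`-valued random variables `η` is negatively
correlated with marginals bounded by `q`, and `η'` is an independent family of
Bernoulli(`q_e`) random variables, then every moment of `Σ η_e` is bounded by the
corresponding moment of `Σ η'_e`. -/
theorem moments_le_of_neg_correlated
    {Ω Ω' : Type*} [MeasurableSpace Ω] [MeasurableSpace Ω']
    (P : Measure Ω) [IsProbabilityMeasure P]
    (P' : Measure Ω') [IsProbabilityMeasure P']
    {E : Type*} [Fintype E]
    (η : E → Ω → ℕ) (hηmeas : ∀ e, Measurable (η e))
    (hη01 : ∀ e ω, η e ω = 0 ∨ η e ω = 1)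
    (q : E → ℝ) (hq : ∀ e, q e ∈ Set.Icc (0 : ℝ) 1)
    (hneg : ∀ S : Finset E,
      P {ω | ∀ e ∈ S, η e ω = 1} ≤ ENNReal.ofReal (∏ e ∈ S, q e))
    (η' : E → Ω' → ℕ) (hη'meas : ∀ e, Measurable (η' e))
    (hη'01 : ∀ e ω, η' e ω = 0 ∨ η' e ω = 1)
    (hind : iIndepFun η' P')
    (hmarg1 : ∀ e, P' {ω | η' e ω = 1} = ENNReal.ofReal (q e))
    (hmarg0 : ∀ e, P' {ω | η' e ω = 0} = ENNReal.ofReal (1 - q e)) :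
    ∀ k : ℕ,
      ∫ ω, (((∑ e, η e ω : ℕ) : ℝ)) ^ k ∂P ≤
        ∫ ω, (((∑ e, η' e ω : ℕ) : ℝ)) ^ k ∂P' :=
  moments_le_of_neg_correlated_general P P' η hηmeas hη01 q hq hneg η' hη'meas hη'01 hind hmarg1
end

section
/- Let (Ω, P) be a probability space, E a finite set, (η_e)_{e∈E} a family of {0,1}-valued random variables on Ω, and (q_e)_{e∈E} numbers in [0,1] such that for every subset S ⊆ E: P[η_e = 1 for all e ∈ S] ≤ ∏_{e∈S} q_e. Then for every real θ ≥ 1: E[θ^{Σ_{e∈E} η_e}] ≤ ∏_{e∈E} (1 + q_e·(θ − 1)). -/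
open MeasureTheory

/-- If a finite family of `{0,1}`-valued random variables `η` is negatively
correlated with marginals bounded by `q`, then for every `θ ≥ 1`,
`E[θ^{Σ η_e}] ≤ ∏_e (1 + q_e(θ−1))`. -/
theorem exp_moment_le_of_neg_correlated
    {Ω : Type*} [MeasurableSpace Ω] (P : Measure Ω) [IsProbabilityMeasure P]
    {E : Type*} [Fintype E]
    (η : E → Ω → ℕ) (hηmeas : ∀ e, Measurable (η e))
    (hη01 : ∀ e ω, η e ω = 0 ∨ η e ω = 1)
    (q : E → ℝ) (hq : ∀ e, q e ∈ Set.Icc (0 : ℝ) 1)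
    (hneg : ∀ S : Finset E,
      P {ω | ∀ e ∈ S, η e ω = 1} ≤ ENNReal.ofReal (∏ e ∈ S, q e)) :
    ∀ θ : ℝ, 1 ≤ θ →
      ∫ ω, θ ^ (∑ e, η e ω) ∂P ≤ ∏ e, (1 + q e * (θ - 1)) := by
  intro θ hθ
  classical
  set c := θ - 1 with hc
  have hc0 : 0 ≤ c := by linarith
  set A : Finset E → Set Ω := fun t => {ω | ∀ e ∈ t, η e ω = 1} with hAdef
  have hA : ∀ t : Finset E, MeasurableSet (A t) := by
    intro t
    have : A t = ⋂ e ∈ t, (η e) ⁻¹' {1} := by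
      ext ω; simp [hAdef]
    rw [this]
    exact MeasurableSet.biInter t.countable_toSet
      (fun e _ => (hηmeas e) (measurableSet_singleton 1))
  -- pointwise expansion
  have hpt : ∀ ω, (θ : ℝ) ^ (∑ e, η e ω)
      = ∑ t ∈ (Finset.univ : Finset E).powerset,
          c ^ t.card * Set.indicator (A t) (fun _ => (1:ℝ)) ω := by
    intro ω
    have h1 : (θ:ℝ) ^ (∑ e, η e ω) = ∏ e, θ ^ (η e ω) :=
      (Finset.prod_pow_eq_pow_sum _ _ _).symm
    have h2 : ∀ e ∈ (Finset.univ : Finset E),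
        (θ:ℝ) ^ (η e ω) = c * (η e ω : ℝ) + 1 := by
      intro e _
      rcases hη01 e ω with h | h <;> simp [h, hc] <;> ring
    rw [h1, Finset.prod_congr rfl h2, Finset.prod_add]
    refine Finset.sum_congr rfl fun t ht => ?_
    have hind : Set.indicator (A t) (fun _ => (1:ℝ)) ω = ∏ e ∈ t, (η e ω : ℝ) := by
      by_cases hmem : ω ∈ A t
      · rw [Set.indicator_of_mem hmem]
        have : ∀ e ∈ t, ((η e ω : ℝ)) = 1 := fun e he => by
          rw [hmem e he]; norm_num
        rw [Finset.prod_congr rfl this, Finset.prod_const_one]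
      · rw [Set.indicator_of_notMem hmem]
        have hmem' : ¬ ∀ e ∈ t, η e ω = 1 := hmem
        push_neg at hmem'
        obtain ⟨e, he, hne⟩ := hmem'
        have h0 : η e ω = 0 := (hη01 e ω).resolve_right hne
        exact (Finset.prod_eq_zero he (by simp [h0])).symm
    rw [hind, Finset.prod_mul_distrib, Finset.prod_const, Finset.prod_const_one,
      mul_one, mul_comm]
  have hint : ∀ t : Finset E,
      Integrable (fun ω => c ^ t.card * Set.indicator (A t) (fun _ => (1:ℝ)) ω) P := by
    intro t
    exact ((integrable_const (1:ℝ)).indicator (hA t)).const_mul _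
  have hI : ∫ ω, θ ^ (∑ e, η e ω) ∂P
      = ∑ t ∈ (Finset.univ : Finset E).powerset, c ^ t.card * (P (A t)).toReal := by
    rw [show (fun ω => θ ^ (∑ e, η e ω)) = fun ω =>
        ∑ t ∈ (Finset.univ : Finset E).powerset,
          c ^ t.card * Set.indicator (A t) (fun _ => (1:ℝ)) ω from funext hpt]
    rw [integral_finset_sum _ fun t _ => hint t]
    refine Finset.sum_congr rfl fun t _ => ?_
    rw [integral_const_mul]
    congr 1
    exact integral_indicator_one (hA t)
  have hPb : ∀ t : Finset E, (P (A t)).toReal ≤ ∏ e ∈ t, q e := fun t =>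
    ENNReal.toReal_le_of_le_ofReal (Finset.prod_nonneg fun e _ => (hq e).1) (hneg t)
  have hfinal : ∏ e, (1 + q e * c)
      = ∑ t ∈ (Finset.univ : Finset E).powerset, c ^ t.card * ∏ e ∈ t, q e := by
    rw [Finset.prod_congr rfl (fun e (_ : e ∈ (Finset.univ : Finset E)) =>
      (by ring : (1:ℝ) + q e * c = c * q e + 1)), Finset.prod_add]
    refine Finset.sum_congr rfl fun t _ => ?_
    rw [Finset.prod_mul_distrib, Finset.prod_const, Finset.prod_const_one, mul_one]
  rw [hI, hc] at *
  rw [hfinal]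
  exact Finset.sum_le_sum fun t _ =>
    mul_le_mul_of_nonneg_left (hPb t) (pow_nonneg hc0 _)
end

section
/- Let (Ω, ℱ, P) be a probability space, let 𝒢 ⊆ ℱ be a sub-σ-algebra, and let A, B ∈ ℱ be events. Then P-almost surely: 𝟙_B · P(B | 𝒢) · P(A | 𝒢 ∨ σ(B)) = 𝟙_B · P(A ∩ B | 𝒢). -/
open MeasureTheory

/-- Any set measurable w.r.t. `G ⊔ σ(B)` agrees with a `G`-measurable set on `B`. -/
lemma measurableSet_sup_generateFrom_singleton_inter
    {Ω : Type*} (G : MeasurableSpace Ω) (B : Set Ω) {C : Set Ω}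
    (hC : MeasurableSet[G ⊔ MeasurableSpace.generateFrom {B}] C) :
    ∃ D, MeasurableSet[G] D ∧ C ∩ B = D ∩ B := by
  let m' : MeasurableSpace Ω :=
    { MeasurableSet' := fun C => ∃ D, MeasurableSet[G] D ∧ C ∩ B = D ∩ B
      measurableSet_empty := ⟨∅, MeasurableSet.empty, by simp⟩
      measurableSet_compl := by
        rintro C ⟨D, hD, hCD⟩
        refine ⟨Dᶜ, hD.compl, ?_⟩
        ext x
        have := Set.ext_iff.mp hCD x
        simp only [Set.mem_inter_iff, Set.mem_compl_iff] at this ⊢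
        tauto
      measurableSet_iUnion := by
        intro f hf
        choose D hD hfD using hf
        exact ⟨⋃ i, D i, MeasurableSet.iUnion hD, by
          rw [Set.iUnion_inter, Set.iUnion_inter]
          exact Set.iUnion_congr hfD⟩ }
  have hle : G ⊔ MeasurableSpace.generateFrom {B} ≤ m' := by
    refine sup_le (fun s hs => ⟨s, hs, rfl⟩) (MeasurableSpace.generateFrom_le ?_)
    rintro s rfl
    exact ⟨Set.univ, MeasurableSet.univ, by simp⟩
  exact hle C hC

lemma indicator_condexp_sup_generateFrom_aux
    {Ω : Type*} (G : MeasurableSpace Ω) {m0 : MeasurableSpace Ω}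
    (P : Measure Ω) [IsProbabilityMeasure P] (hG : G ≤ m0)
    (A B : Set Ω) (hA : MeasurableSet[m0] A) (hB : MeasurableSet[m0] B) :
    ∀ᵐ ω ∂P,
      B.indicator (fun _ => (1 : ℝ)) ω *
        (P[B.indicator (fun _ => (1 : ℝ))|G]) ω *
        (P[A.indicator (fun _ => (1 : ℝ))|G ⊔ MeasurableSpace.generateFrom {B}]) ω =
      B.indicator (fun _ => (1 : ℝ)) ω *
        (P[(A ∩ B).indicator (fun _ => (1 : ℝ))|G]) ω := by
  have hH : G ⊔ MeasurableSpace.generateFrom {B} ≤ m0 := by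
    refine sup_le hG (MeasurableSpace.generateFrom_le ?_)
    rintro s rfl; exact hB
  set fA := A.indicator (fun _ => (1 : ℝ)) with hfAdef
  set fB := B.indicator (fun _ => (1 : ℝ)) with hfBdef
  set fAB := (A ∩ B).indicator (fun _ => (1 : ℝ)) with hfABdef
  set h := P[fB|G] with hhdef
  set g := P[fAB|G] with hgdef
  have hfA_int : Integrable fA P := (integrable_const (1 : ℝ)).indicator hA
  have hfB_int : Integrable fB P := (integrable_const (1 : ℝ)).indicator hB
  have hfAB_int : Integrable fAB P := (integrable_const (1 : ℝ)).indicator (hA.inter hB)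
  have hh_sm : StronglyMeasurable[G] h := stronglyMeasurable_condExp (m := G)
  have hg_sm : StronglyMeasurable[G] g := stronglyMeasurable_condExp (m := G)
  have hh_int : Integrable h P := integrable_condExp
  have hg_int : Integrable g P := integrable_condExp
  have hB_H : MeasurableSet[G ⊔ MeasurableSpace.generateFrom {B}] B :=
    le_sup_right (α := MeasurableSpace Ω) _
      (MeasurableSpace.measurableSet_generateFrom (Set.mem_singleton B))
  haveI : IsFiniteMeasure (P.trim hH) := isFiniteMeasure_trim hH
  haveI : IsFiniteMeasure (P.trim hG) := isFiniteMeasure_trim hG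
  -- pointwise identities
  have hLfA : (fun ω => fB ω * h ω * fA ω) = (A ∩ B).indicator h := by
    funext ω
    by_cases hω : ω ∈ A ∩ B
    · simp [hfBdef, hfAdef, Set.indicator_of_mem hω.2, Set.indicator_of_mem hω.1,
        Set.indicator_of_mem hω]
    · rw [Set.indicator_of_notMem hω]
      rw [Set.mem_inter_iff, not_and_or] at hω
      rcases hω with hω | hω
      · simp [hfAdef, Set.indicator_of_notMem hω]
      · simp [hfBdef, Set.indicator_of_notMem hω]
  have hgfB : (fun ω => g ω * fB ω) = B.indicator g := by
    funext ω
    by_cases hω : ω ∈ B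
    · simp [hfBdef, Set.indicator_of_mem hω]
    · simp [hfBdef, Set.indicator_of_notMem hω]
  have hhfAB : (fun ω => h ω * fAB ω) = (A ∩ B).indicator h := by
    funext ω
    by_cases hω : ω ∈ A ∩ B
    · simp [hfABdef, Set.indicator_of_mem hω]
    · simp [hfABdef, Set.indicator_of_notMem hω]
  have hABh_int : Integrable ((A ∩ B).indicator h) P := hh_int.indicator (hA.inter hB)
  have hBg_int : Integrable (B.indicator g) P := hg_int.indicator hB
  -- key: for all G-measurable D, ∫_D 𝟙_B g = ∫_D 𝟙_{A∩B} h
  have key : ∀ D : Set Ω, MeasurableSet[G] D →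
      ∫ x in D, (B.indicator g) x ∂P = ∫ x in D, ((A ∩ B).indicator h) x ∂P := by
    intro D hD
    have e1 : P[fun ω => g ω * fB ω|G] =ᵐ[P] fun ω => g ω * h ω :=
      condExp_mul_of_stronglyMeasurable_left hg_sm (by rw [show (g * fB) = fun ω => g ω * fB ω from rfl, hgfB]; exact hBg_int) hfB_int
    have e2 : P[fun ω => h ω * fAB ω|G] =ᵐ[P] fun ω => h ω * g ω :=
      condExp_mul_of_stronglyMeasurable_left hh_sm (by rw [show (h * fAB) = fun ω => h ω * fAB ω from rfl, hhfAB]; exact hABh_int) hfAB_int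
    have i1 : ∫ x in D, (B.indicator g) x ∂P = ∫ x in D, g x * h x ∂P := by
      rw [← hgfB, ← setIntegral_condExp hG (by rw [show (fun ω => g ω * fB ω) = B.indicator g from hgfB]; exact hBg_int) hD]
      exact setIntegral_congr_ae (hG D hD) (e1.mono fun x hx _ => hx)
    have i2 : ∫ x in D, ((A ∩ B).indicator h) x ∂P = ∫ x in D, h x * g x ∂P := by
      rw [← hhfAB, ← setIntegral_condExp hG (by rw [show (fun ω => h ω * fAB ω) = (A ∩ B).indicator h from hhfAB]; exact hABh_int) hD]
      exact setIntegral_congr_ae (hG D hD) (e2.mono fun x hx _ => hx)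
    rw [i1, i2]
    exact setIntegral_congr_fun (hG D hD) fun x _ => mul_comm _ _
  -- B.indicator g is a version of P[𝟙_{A∩B} h | H]
  have E2 : B.indicator g =ᵐ[P] P[(A ∩ B).indicator h|G ⊔ MeasurableSpace.generateFrom {B}] := by
    refine ae_eq_condExp_of_forall_setIntegral_eq hH hABh_int
      (fun s _ _ => hBg_int.integrableOn) (fun s hs _ => ?_) ?_
    · obtain ⟨D, hD, hDB⟩ := measurableSet_sup_generateFrom_singleton_inter G B hs
      have l1 : ∫ x in s, (B.indicator g) x ∂P = ∫ x in D, (B.indicator g) x ∂P := by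
        rw [setIntegral_indicator hB, setIntegral_indicator hB, hDB]
      have l2 : ∫ x in s, ((A ∩ B).indicator h) x ∂P
          = ∫ x in D, ((A ∩ B).indicator h) x ∂P := by
        rw [setIntegral_indicator (hA.inter hB), setIntegral_indicator (hA.inter hB)]
        congr 1
        rw [show s ∩ (A ∩ B) = (s ∩ B) ∩ A by ext x; simp; tauto, hDB,
          show (D ∩ B) ∩ A = D ∩ (A ∩ B) by ext x; simp; tauto]
      rw [l1, l2]
      exact key D hD
    · exact StronglyMeasurable.aestronglyMeasurable
        ((hg_sm.mono le_sup_left).indicator hB_H)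
  -- pull-out property at level H
  have hL_sm : StronglyMeasurable[G ⊔ MeasurableSpace.generateFrom {B}] (fun ω => fB ω * h ω) := by
    have h1 : StronglyMeasurable[G ⊔ MeasurableSpace.generateFrom {B}] fB :=
      (stronglyMeasurable_const.indicator hB_H)
    exact h1.mul (hh_sm.mono le_sup_left)
  have E1 : P[fun ω => (fun ω => fB ω * h ω) ω * fA ω|G ⊔ MeasurableSpace.generateFrom {B}]
      =ᵐ[P] fun ω => (fun ω => fB ω * h ω) ω * (P[fA|G ⊔ MeasurableSpace.generateFrom {B}]) ω := by
    have := condExp_mul_of_stronglyMeasurable_left (μ := P) (m := G ⊔ MeasurableSpace.generateFrom {B}) hL_sm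
      (g := fA) (by rw [show ((fun ω => fB ω * h ω) * fA) = fun ω => fB ω * h ω * fA ω from rfl, hLfA]; exact hABh_int) hfA_int
    exact this
  have E1' : P[(A ∩ B).indicator h|G ⊔ MeasurableSpace.generateFrom {B}]
      =ᵐ[P] fun ω => fB ω * h ω * (P[fA|G ⊔ MeasurableSpace.generateFrom {B}]) ω := by
    rw [show ((fun ω => (fun ω => fB ω * h ω) ω * fA ω)) = (A ∩ B).indicator h from hLfA] at E1
    exact E1
  filter_upwards [E2, E1'] with ω h2 h1
  rw [← h1, ← h2]
  by_cases hω : ω ∈ B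
  · simp [hfBdef, Set.indicator_of_mem hω]
  · simp [hfBdef, Set.indicator_of_notMem hω]

/-- For events `A, B` and a sub-σ-algebra `𝒢`:
`𝟙_B · P(B | 𝒢) · P(A | 𝒢 ∨ σ(B)) = 𝟙_B · P(A ∩ B | 𝒢)` almost surely. -/
theorem indicator_condexp_sup_generateFrom
    {Ω : Type*} {m0 : MeasurableSpace Ω} (P : Measure Ω) [IsProbabilityMeasure P]
    (G : MeasurableSpace Ω) (hG : G ≤ m0)
    (A B : Set Ω) (hA : MeasurableSet[m0] A) (hB : MeasurableSet[m0] B) :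
    ∀ᵐ ω ∂P,
      B.indicator (fun _ => (1 : ℝ)) ω *
        (P[B.indicator (fun _ => (1 : ℝ))|G]) ω *
        (P[A.indicator (fun _ => (1 : ℝ))|G ⊔ MeasurableSpace.generateFrom {B}]) ω =
      B.indicator (fun _ => (1 : ℝ)) ω *
        (P[(A ∩ B).indicator (fun _ => (1 : ℝ))|G]) ω :=
  indicator_condexp_sup_generateFrom_aux G P hG A B hA hB
end

section
/- Let (Ω, ℱ, P) be a probability space, ℋ ⊆ ℱ a sub-σ-algebra, U : Ω → {0,1} an ℱ-measurable random variable, A ∈ ℋ an event, and p ∈ [0,1) a constant. Let p_ℋ be a version of P[U = 1 | ℋ] and assume that p_ℋ · 𝟙_A ≤ p almost surely. Let ζ be a random variable, uniformly distributed on [0,1], independent of the σ-algebra generated by ℋ and U. Define U* = 𝟙_A · ( U + (1 − U) · 𝟙{ζ ≤ (p − p_ℋ)/(1 − p_ℋ)} ) + 𝟙_{A^c} · 𝟙{ζ ≤ p}. Then: (i) U · 𝟙_A ≤ U*; (ii) P[U* = 1 | ℋ] = p almost surely; consequently U* is a Bernoulli(p) random variable independent of ℋ. -/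
open MeasureTheory ProbabilityTheory

/-!
Off the null event `ζ ∉ (0, 1]`, `U* = 𝟙{ζ ≤ θ}` for the `σ(ℋ, U)`-measurable threshold
`θ = 𝟙_A (U + (1 - U) (p - p_ℋ) / (1 - p_ℋ)) + 𝟙_{Aᶜ} p`, which takes values in `[0, 1]`.
As `ζ` is uniform and independent of `σ(ℋ, U)`, freezing `θ` gives `P({ζ ≤ θ} ∩ B) = ∫_B θ`
for `B ∈ ℋ`. On `A`, `θ - p = (1 - p) / (1 - p_ℋ) · (U - p_ℋ)` is an `ℋ`-measurable multiple of
a variable with vanishing `ℋ`-conditional mean, so `∫_B θ = p P(B)`. Hence `{U* = 1}` is an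
event of probability `p` independent of `ℋ`, and `U*`, being `{0, 1}`-valued, is its indicator.
-/

lemma indicator_setOf_eq_one_of_eq_zero_or_one {α : Type*} {f : α → ℝ}
    (hf : ∀ x, f x = 0 ∨ f x = 1) : {x | f x = 1}.indicator (fun _ => (1 : ℝ)) = f := by
  funext x
  rcases hf x with h | h <;> simp [h]

section UniformThreshold

variable {Ω : Type*} {m m' m0 : MeasurableSpace Ω} {P : Measure Ω}

lemma volume_restrict_Icc_zero_one_Iic {t : ℝ} (ht1 : t ≤ 1) :
    volume.restrict (Set.Icc (0 : ℝ) 1) (Set.Iic t) = ENNReal.ofReal t := by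
  have h : Set.Iic t ∩ Set.Icc 0 1 = Set.Icc 0 t :=
    Set.ext fun _ => ⟨fun h => ⟨h.2.1, h.1⟩, fun h => ⟨h.2, h.1, h.2.trans ht1⟩⟩
  rw [Measure.restrict_apply measurableSet_Iic, h, Real.volume_Icc, sub_zero]

lemma ae_mem_Ioc_of_map_eq_uniform {ζ : Ω → ℝ} (hζ : Measurable ζ)
    (hunif : P.map ζ = volume.restrict (Set.Icc 0 1)) : ∀ᵐ ω ∂P, ζ ω ∈ Set.Ioc (0 : ℝ) 1 := by
  have h : ∀ᵐ x ∂P.map ζ, x ∈ Set.Ioc (0 : ℝ) 1 := by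
    rw [hunif, ← Measure.restrict_congr_set Ioc_ae_eq_Icc]
    exact ae_restrict_mem measurableSet_Ioc
  exact ae_of_ae_map hζ.aemeasurable h

lemma integrable_of_ae_mem_Icc [IsFiniteMeasure P] {θ : Ω → ℝ} (hθ : AEStronglyMeasurable θ P)
    (hθ01 : ∀ᵐ ω ∂P, θ ω ∈ Set.Icc (0 : ℝ) 1) : Integrable θ P :=
  Integrable.of_bound hθ 1 <| hθ01.mono fun _ h => by
    rw [Real.norm_eq_abs, abs_le]; constructor <;> linarith [h.1, h.2]

theorem measure_setOf_le_eq_ofReal_integral [IsFiniteMeasure P] (hm : m ≤ m0) {ζ θ : Ω → ℝ}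
    (hζ : Measurable ζ) (hunif : P.map ζ = volume.restrict (Set.Icc 0 1))
    (hind : Indep (MeasurableSpace.comap ζ Real.measurableSpace) m P)
    (hθ : Measurable[m] θ) (hθ01 : ∀ᵐ ω ∂P, θ ω ∈ Set.Icc (0 : ℝ) 1) :
    P {ω | ζ ω ≤ θ ω} = ENNReal.ofReal (∫ ω, θ ω ∂P) := by
  have hθ0 : Measurable θ := hθ.mono hm le_rfl
  have hθint : Integrable θ P := integrable_of_ae_mem_Icc hθ0.aestronglyMeasurable hθ01
  have hθζ : IndepFun θ ζ P := by
    rw [IndepFun_iff_Indep]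
    exact indep_of_indep_of_le_left hind.symm hθ.comap_le
  have hS : MeasurableSet {q : ℝ × ℝ | q.2 ≤ q.1} :=
    measurableSet_le measurable_snd measurable_fst
  calc P {ω | ζ ω ≤ θ ω} = P.map (fun ω => (θ ω, ζ ω)) {q | q.2 ≤ q.1} :=
        (Measure.map_apply (hθ0.prodMk hζ) hS).symm
    _ = ((P.map θ).prod (P.map ζ)) {q | q.2 ≤ q.1} := by
        rw [(indepFun_iff_map_prod_eq_prod_map_map hθ0.aemeasurable hζ.aemeasurable).1 hθζ]
    _ = ∫⁻ x, P.map ζ (Set.Iic x) ∂P.map θ := Measure.prod_apply hS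
    _ = ∫⁻ ω, P.map ζ (Set.Iic (θ ω)) ∂P :=
        lintegral_map (measurable_measure_prodMk_left hS) hθ0
    _ = ∫⁻ ω, ENNReal.ofReal (θ ω) ∂P := lintegral_congr_ae <| hθ01.mono fun _ h => by
        dsimp only
        rw [hunif, volume_restrict_Icc_zero_one_Iic h.2]
    _ = ENNReal.ofReal (∫ ω, θ ω ∂P) :=
        (ofReal_integral_eq_lintegral_ofReal hθint (hθ01.mono fun _ h => h.1)).symm

theorem measure_setOf_le_inter_eq_of_condExp_ae_eq_const [IsFiniteMeasure P] (hm : m ≤ m')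
    (hm' : m' ≤ m0) {ζ θ : Ω → ℝ} {c : ℝ} (hζ : Measurable ζ)
    (hunif : P.map ζ = volume.restrict (Set.Icc 0 1))
    (hind : Indep (MeasurableSpace.comap ζ Real.measurableSpace) m' P)
    (hθ : Measurable[m'] θ) (hθ01 : ∀ᵐ ω ∂P, θ ω ∈ Set.Icc (0 : ℝ) 1)
    (hθc : P[θ|m] =ᵐ[P] fun _ => c) {B : Set Ω} (hB : MeasurableSet[m] B) :
    P ({ω | ζ ω ≤ θ ω} ∩ B) = ENNReal.ofReal c * P B := by
  have hB0 : MeasurableSet B := hm' _ (hm _ hB)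
  have hθint : Integrable θ P :=
    integrable_of_ae_mem_Icc (hθ.mono hm' le_rfl).aestronglyMeasurable hθ01
  -- off `B` the threshold becomes `0`, which `ζ` a.s. does not reach
  have hcut : ({ω | ζ ω ≤ θ ω} ∩ B : Set Ω) =ᵐ[P] {ω | ζ ω ≤ B.indicator θ ω} := by
    filter_upwards [ae_mem_Ioc_of_map_eq_uniform hζ hunif] with ω hω
    change (ω ∈ {ω | ζ ω ≤ θ ω} ∩ B) = (ω ∈ {ω | ζ ω ≤ B.indicator θ ω})
    by_cases hωB : ω ∈ B <;> simp [hωB, hω.1]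
  calc P ({ω | ζ ω ≤ θ ω} ∩ B) = P {ω | ζ ω ≤ B.indicator θ ω} := measure_congr hcut
    _ = ENNReal.ofReal (∫ ω in B, θ ω ∂P) := by
        rw [measure_setOf_le_eq_ofReal_integral hm' hζ hunif hind (hθ.indicator (hm _ hB)),
          integral_indicator hB0]
        filter_upwards [hθ01] with ω hω
        by_cases hωB : ω ∈ B <;> simp [hωB, hω.1, hω.2]
    _ = ENNReal.ofReal (∫ ω in B, P[θ|m] ω ∂P) := by
        rw [setIntegral_condExp (hm.trans hm') hθint hB]
    _ = ENNReal.ofReal c * P B := by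
        rw [setIntegral_congr_ae hB0 (hθc.mono fun _ h _ => h), setIntegral_const, smul_eq_mul,
          mul_comm, ENNReal.ofReal_mul' measureReal_nonneg, ofReal_measureReal]

theorem indep_generateFrom_singleton_of_measure_inter [IsZeroOrProbabilityMeasure P]
    (hm : m ≤ m0) {T : Set Ω} (hT : MeasurableSet T)
    (h : ∀ B, MeasurableSet[m] B → P (T ∩ B) = P T * P B) :
    Indep (MeasurableSpace.generateFrom {T}) m P :=
  IndepSets.indep (MeasurableSpace.generateFrom_singleton_le hT) hm (IsPiSystem.singleton T)
    (@MeasurableSpace.isPiSystem_measurableSet Ω m) rfl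
    (@MeasurableSpace.generateFrom_measurableSet Ω m).symm
    ((IndepSets_iff _ _ _).2 fun _ B hT hB => by rw [Set.mem_singleton_iff.1 hT]; exact h B hB)

end UniformThreshold

section Coupling

variable {Ω : Type*} {m m0 : MeasurableSpace Ω} {P : Measure Ω}
  {A : Set Ω} {U pH ζ : Ω → ℝ} {p : ℝ} {ω : Ω}

noncomputable def couplingVariable (A : Set Ω) (U pH : Ω → ℝ) (p : ℝ) (ζ : Ω → ℝ) : Ω → ℝ :=
  fun ω => A.indicator (fun ω' => U ω' + (1 - U ω') *
      Set.indicator {ω'' | ζ ω'' ≤ (p - pH ω'') / (1 - pH ω'')} (fun _ => (1 : ℝ)) ω') ω +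
    Aᶜ.indicator (fun ω' => Set.indicator {ω'' | ζ ω'' ≤ p} (fun _ => (1 : ℝ)) ω') ω

noncomputable def couplingThreshold (A : Set Ω) (U pH : Ω → ℝ) (p : ℝ) : Ω → ℝ :=
  A.indicator (fun ω => U ω + (1 - U ω) * ((p - pH ω) / (1 - pH ω))) + Aᶜ.indicator fun _ => p

lemma measurable_couplingVariable (hA : MeasurableSet A) (hU : Measurable U)
    (hpH : Measurable pH) (hζ : Measurable ζ) : Measurable (couplingVariable A U pH p ζ) :=
  ((hU.add ((measurable_const.sub hU).mul (measurable_const.indicator (measurableSet_le hζ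
      ((measurable_const.sub hpH).div (measurable_const.sub hpH)))))).indicator hA).add
    ((measurable_const.indicator (measurableSet_le hζ measurable_const)).indicator hA.compl)

lemma couplingVariable_eq_zero_or_one (hU : U ω = 0 ∨ U ω = 1) :
    couplingVariable A U pH p ζ ω = 0 ∨ couplingVariable A U pH p ζ ω = 1 := by
  by_cases hA : ω ∈ A <;> rcases hU with h | h <;>
    simp [couplingVariable, hA, h, Set.indicator_apply, lt_or_ge]

lemma mul_indicator_le_couplingVariable (hU : U ω = 0 ∨ U ω = 1) :
    U ω * A.indicator (fun _ => (1 : ℝ)) ω ≤ couplingVariable A U pH p ζ ω := by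
  by_cases hA : ω ∈ A <;> rcases hU with h | h <;>
    simp [couplingVariable, hA, h, Set.indicator_apply] <;> split_ifs <;> simp

lemma couplingVariable_eq_one_iff (hU : U ω = 0 ∨ U ω = 1) (hζ : ζ ω ≤ 1) :
    couplingVariable A U pH p ζ ω = 1 ↔ ζ ω ≤ couplingThreshold A U pH p ω := by
  by_cases hA : ω ∈ A <;> rcases hU with h | h <;>
    simp [couplingVariable, couplingThreshold, hA, h, Set.indicator_apply, hζ]

lemma measurable_couplingThreshold (hA : MeasurableSet[m] A) (hU : Measurable[m] U)
    (hpH : Measurable[m] pH) : Measurable[m] (couplingThreshold A U pH p) :=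
  ((hU.add ((measurable_const.sub hU).mul
    ((measurable_const.sub hpH).div (measurable_const.sub hpH)))).indicator hA).add
    (measurable_const.indicator hA.compl)

lemma couplingThreshold_mem_Icc (hU : U ω = 0 ∨ U ω = 1) (hpH : ω ∈ A → pH ω ≤ p) (hp0 : 0 ≤ p)
    (hp1 : p < 1) : couplingThreshold A U pH p ω ∈ Set.Icc 0 1 := by
  by_cases hA : ω ∈ A
  · have hpos : 0 < 1 - pH ω := by linarith [hpH hA]
    rcases hU with h | h
    · have hr : (p - pH ω) / (1 - pH ω) ∈ Set.Icc 0 1 :=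
        ⟨div_nonneg (by linarith [hpH hA]) hpos.le, (div_le_one hpos).2 (by linarith)⟩
      simpa [couplingThreshold, hA, h] using hr
    · simp [couplingThreshold, hA, h]
  · simp [couplingThreshold, hA, hp0, hp1.le]

theorem condExp_couplingThreshold [IsFiniteMeasure P] (hm : m ≤ m0) (hU : Integrable U P)
    (hA : MeasurableSet[m] A) (hpHm : Measurable[m] pH) (hpH : pH =ᵐ[P] P[U|m]) (hp1 : p < 1)
    (hbound : ∀ᵐ ω ∂P, ω ∈ A → pH ω ≤ p) :
    P[couplingThreshold A U pH p|m] =ᵐ[P] fun _ => p := by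
  set g : Ω → ℝ := A.indicator fun ω => (1 - p) / (1 - pH ω)
  have hgm : StronglyMeasurable[m] g :=
    ((measurable_const.div (measurable_const.sub hpHm)).indicator hA).stronglyMeasurable
  have hg1 : ∀ᵐ ω ∂P, ‖g ω‖ ≤ 1 := by
    filter_upwards [hbound] with ω hω
    by_cases hωA : ω ∈ A
    · have hle : 1 - p ≤ 1 - pH ω := by linarith [hω hωA]
      rw [show g ω = (1 - p) / (1 - pH ω) from Set.indicator_of_mem hωA _,
        Real.norm_of_nonneg (div_nonneg (by linarith) (by linarith)), div_le_one (by linarith)]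
      exact hle
    · simp [g, hωA]
  have hpHint : Integrable pH P := integrable_condExp.congr hpH.symm
  have hgU : Integrable (g * (U - pH)) P :=
    (hU.sub hpHint).bdd_mul (hgm.mono hm).aestronglyMeasurable hg1
  have hcentered : P[U - pH|m] =ᵐ[P] 0 := by
    filter_upwards [condExp_sub hU hpHint m, hpH] with ω h hω
    rw [h, Pi.sub_apply, condExp_of_stronglyMeasurable hm hpHm.stronglyMeasurable hpHint, ← hω,
      sub_self, Pi.zero_apply]
  have hθ : couplingThreshold A U pH p =ᵐ[P] (fun _ => p) + g * (U - pH) := by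
    filter_upwards [hbound] with ω hω
    by_cases hωA : ω ∈ A
    · have : 1 - pH ω ≠ 0 := by linarith [hω hωA]
      simp only [couplingThreshold, g, Pi.add_apply, Pi.mul_apply, Pi.sub_apply,
        Set.indicator_of_mem hωA, Set.indicator_of_notMem (Set.notMem_compl_iff.2 hωA), add_zero]
      field_simp
      ring
    · simp [couplingThreshold, g, hωA]
  calc P[couplingThreshold A U pH p|m] =ᵐ[P] P[(fun _ => p) + g * (U - pH)|m] :=
        condExp_congr_ae hθ
    _ =ᵐ[P] (fun _ => p) + P[g * (U - pH)|m] := by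
        simpa only [condExp_const hm] using condExp_add (integrable_const p) hgU m
    _ =ᵐ[P] (fun _ => p) + g * P[U - pH|m] :=
        .add .rfl (condExp_mul_of_stronglyMeasurable_left hgm hgU (hU.sub hpHint))
    _ =ᵐ[P] fun _ => p := by
        filter_upwards [hcentered] with ω h
        simp [h]

theorem measure_couplingVariable_eq_one_inter [IsFiniteMeasure P] (hm : m ≤ m0)
    (hU : Measurable U) (hU01 : ∀ ω, U ω = 0 ∨ U ω = 1) (hA : MeasurableSet[m] A)
    (hp0 : 0 ≤ p) (hp1 : p < 1) (hpHm : Measurable[m] pH) (hpH : pH =ᵐ[P] P[U|m])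
    (hbound : ∀ᵐ ω ∂P, ω ∈ A → pH ω ≤ p) (hζ : Measurable ζ)
    (hunif : P.map ζ = volume.restrict (Set.Icc 0 1))
    (hind : Indep (MeasurableSpace.comap ζ Real.measurableSpace)
      (m ⊔ MeasurableSpace.comap U Real.measurableSpace) P)
    {B : Set Ω} (hB : MeasurableSet[m] B) :
    P ({ω | couplingVariable A U pH p ζ ω = 1} ∩ B) = ENNReal.ofReal p * P B := by
  have hUint : Integrable U P := Integrable.of_bound hU.aestronglyMeasurable 1
    (ae_of_all _ fun ω => by rcases hU01 ω with h | h <;> simp [h])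
  have hmG : m ≤ m ⊔ MeasurableSpace.comap U Real.measurableSpace := le_sup_left
  have hθm : Measurable[m ⊔ MeasurableSpace.comap U Real.measurableSpace]
      (couplingThreshold A U pH p) :=
    measurable_couplingThreshold (hmG _ hA) (measurable_iff_comap_le.2 le_sup_right)
      (hpHm.mono hmG le_rfl)
  have hθ : {ω | couplingVariable A U pH p ζ ω = 1} =ᵐ[P]
      {ω | ζ ω ≤ couplingThreshold A U pH p ω} := by
    filter_upwards [ae_mem_Ioc_of_map_eq_uniform hζ hunif] with ω hω
    exact propext (couplingVariable_eq_one_iff (hU01 ω) hω.2)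
  rw [measure_congr (hθ.inter (ae_eq_refl B))]
  exact measure_setOf_le_inter_eq_of_condExp_ae_eq_const hmG (sup_le hm hU.comap_le) hζ hunif
    hind hθm (hbound.mono fun ω h => couplingThreshold_mem_Icc (hU01 ω) h hp0 hp1)
    (condExp_couplingThreshold hm hUint hA hpHm hpH hp1 hbound) hB

end Coupling

/-- The coupling construction dominating a dependent Bernoulli variable `U` (on the
event `A ∈ ℋ`) by an exactly Bernoulli(`p`) variable `U*` independent of `ℋ`:
if `p_ℋ` is a version of `P[U = 1 | ℋ]` with `p_ℋ·𝟙_A ≤ p` a.s., and `ζ` is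
uniform on `[0,1]` and independent of `σ(ℋ, U)`, then
`U* = 𝟙_A(U + (1−U)·𝟙{ζ ≤ (p−p_ℋ)/(1−p_ℋ)}) + 𝟙_{Aᶜ}·𝟙{ζ ≤ p}` satisfies
`U·𝟙_A ≤ U*`, `P[U* = 1 | ℋ] = p` a.s., and consequently `U*` is a Bernoulli(`p`)
random variable independent of `ℋ`. -/
theorem bernoulli_domination_coupling
    {Ω : Type*} {m0 : MeasurableSpace Ω} (P : Measure Ω) [IsProbabilityMeasure P]
    (H : MeasurableSpace Ω) (hH : H ≤ m0)
    (U : Ω → ℝ) (hUmeas : Measurable[m0] U) (hU01 : ∀ ω, U ω = 0 ∨ U ω = 1)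
    (A : Set Ω) (hA : MeasurableSet[H] A)
    (p : ℝ) (hp0 : 0 ≤ p) (hp1 : p < 1)
    (pH : Ω → ℝ) (hpHmeas : Measurable[H] pH)
    (hpH : pH =ᵐ[P] P[Set.indicator {ω | U ω = 1} (fun _ => (1 : ℝ))|H])
    (hbound : ∀ᵐ ω ∂P, pH ω * A.indicator (fun _ => (1 : ℝ)) ω ≤ p)
    (ζ : Ω → ℝ) (hζmeas : Measurable[m0] ζ)
    (hunif : @Measure.map Ω ℝ m0 Real.measurableSpace ζ P =
      MeasureTheory.volume.restrict (Set.Icc (0 : ℝ) 1))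
    (hindep : Indep (MeasurableSpace.comap ζ Real.measurableSpace)
        (H ⊔ MeasurableSpace.comap U Real.measurableSpace) P)
    (Ustar : Ω → ℝ)
    (hUstar : ∀ ω, Ustar ω =
      A.indicator (fun ω' => U ω' + (1 - U ω') *
        Set.indicator {ω'' | ζ ω'' ≤ (p - pH ω'') / (1 - pH ω'')} (fun _ => (1 : ℝ)) ω') ω +
      Aᶜ.indicator (fun ω' =>
        Set.indicator {ω'' | ζ ω'' ≤ p} (fun _ => (1 : ℝ)) ω') ω) :
    (∀ ω, U ω * A.indicator (fun _ => (1 : ℝ)) ω ≤ Ustar ω) ∧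
    (P[Set.indicator {ω | Ustar ω = 1} (fun _ => (1 : ℝ))|H] =ᵐ[P] fun _ => p) ∧
    Indep (MeasurableSpace.comap Ustar Real.measurableSpace) H P ∧
    P {ω | Ustar ω = 1} = ENNReal.ofReal p := by
  obtain rfl : Ustar = couplingVariable A U pH p ζ := funext hUstar
  set T := {ω | couplingVariable A U pH p ζ ω = 1}
  have hT : MeasurableSet[m0] T := measurable_couplingVariable (hH _ hA) hUmeas
    (hpHmeas.mono hH le_rfl) hζmeas (measurableSet_singleton 1)
  rw [indicator_setOf_eq_one_of_eq_zero_or_one hU01] at hpH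
  have key : ∀ B, MeasurableSet[H] B → P (T ∩ B) = ENNReal.ofReal p * P B :=
    fun B => measure_couplingVariable_eq_one_inter hH hUmeas hU01 hA hp0 hp1 hpHmeas hpH
      (hbound.mono fun ω h hωA => by simpa [hωA] using h) hζmeas hunif hindep
  have hPT : P T = ENNReal.ofReal p := by simpa using key Set.univ MeasurableSet.univ
  have hindT : Indep (MeasurableSpace.generateFrom {T}) H P :=
    indep_generateFrom_singleton_of_measure_inter hH hT fun B hB => by rw [key B hB, hPT]
  refine ⟨fun ω => mul_indicator_le_couplingVariable (hU01 ω), ?_, ?_, hPT⟩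
  · refine (condExp_indep_eq (MeasurableSpace.generateFrom_singleton_le hT) hH
      (stronglyMeasurable_const.indicator (MeasurableSpace.measurableSet_generateFrom rfl))
      hindT).trans (ae_of_all _ fun _ => ?_)
    rw [integral_indicator hT, setIntegral_const, smul_eq_mul, mul_one, measureReal_def, hPT,
      ENNReal.toReal_ofReal hp0]
  · rw [← indicator_setOf_eq_one_of_eq_zero_or_one (f := couplingVariable A U pH p ζ)
      fun ω => couplingVariable_eq_zero_or_one (hU01 ω)]
    exact indep_of_indep_of_le_left hindT
      (MeasurableSpace.comap_indicator_const_le_generateFrom_singleton _ _)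
end

section
/- Let (Ω, ℱ, P) be a probability space carrying a filtration ℱ_0 ⊆ ℱ_1 ⊆ … ⊆ ℱ_m ⊆ ℱ. For 1 ≤ n ≤ m let U_n : Ω → {0,1} be ℱ_n-measurable and let A_n ∈ ℱ_{n−1}. Let p ∈ [0,1] and assume that for each n, P[U_n = 1 | ℱ_{n−1}] · 𝟙_{A_n} ≤ p almost surely. Then the random variable S = Σ_{n=1}^m U_n·𝟙_{A_n} is stochastically dominated by a Binomial(m, p) random variable; that is, for every integer j with 0 ≤ j ≤ m: P[S ≥ j] ≤ Σ_{i=j}^m C(m,i)·p^i·(1−p)^{m−i}, where C(m,i) is the binomial coefficient. -/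
/-!
Write `X_n = U_n·𝟙_{A_n}`, `S_k = X_1 + ⋯ + X_k` and `T(k, j) = P[Bin(k, p) ≥ j]`; we show
`P[S_k ≥ j] ≤ T(k, j)` by induction on `k`. Since `X_{k+1} ∈ {0,1}`, the event `S_{k+1} ≥ j + 1`
lies in `{S_k ≥ j + 1} ∪ (D ∩ {X_{k+1} = 1})`, where `D = {S_k ≥ j} \ {S_k ≥ j + 1} ∈ ℱ_k`.
Integrating the conditional bound over `D` gives `P(D ∩ {X_{k+1} = 1}) ≤ p·P(D)`, hence
`P[S_{k+1} ≥ j + 1] ≤ (1 - p)·P[S_k ≥ j + 1] + p·P[S_k ≥ j]`, and by Pascal's rule the binomial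
tails satisfy this recursion with equality.
-/

open MeasureTheory Finset

def binomialTail (p : ℝ) (k j : ℕ) : ℝ :=
  ∑ i ∈ Icc j k, (k.choose i : ℝ) * p ^ i * (1 - p) ^ (k - i)

theorem binomialTail_zero_right (p : ℝ) (k : ℕ) : binomialTail p k 0 = 1 := by
  have h := add_pow p (1 - p) k
  rw [add_sub_cancel, one_pow] at h
  rw [binomialTail, ← Nat.range_succ_eq_Icc_zero]
  exact (sum_congr rfl fun i _ => by ring).trans h.symm

theorem choose_mul_pow_mul_pow_succ_succ (p : ℝ) (k i : ℕ) :
    ((k + 1).choose (i + 1) : ℝ) * p ^ (i + 1) * (1 - p) ^ (k + 1 - (i + 1)) =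
      (1 - p) * ((k.choose (i + 1) : ℝ) * p ^ (i + 1) * (1 - p) ^ (k - (i + 1))) +
        p * ((k.choose i : ℝ) * p ^ i * (1 - p) ^ (k - i)) := by
  rw [Nat.choose_succ_succ', Nat.cast_add, Nat.add_sub_add_right]
  rcases lt_or_ge i k with hik | hki
  · rw [show k - i = k - (i + 1) + 1 by omega]
    ring
  · rw [Nat.choose_eq_zero_of_lt (by omega : k < i + 1)]
    ring

theorem binomialTail_succ_succ (p : ℝ) (k j : ℕ) :
    binomialTail p (k + 1) (j + 1) =
      (1 - p) * binomialTail p k (j + 1) + p * binomialTail p k j := by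
  have hshift (g : ℕ → ℝ) : ∑ i ∈ Icc (j + 1) (k + 1), g i = ∑ i ∈ Icc j k, g (i + 1) := by
    rw [← map_add_right_Icc, sum_map]
    rfl
  have hextend : binomialTail p k (j + 1) =
      ∑ i ∈ Icc (j + 1) (k + 1), (k.choose i : ℝ) * p ^ i * (1 - p) ^ (k - i) := by
    refine sum_subset (Icc_subset_Icc_right k.le_succ) fun i hi hi' => ?_
    simp only [mem_Icc] at hi hi'
    rw [Nat.choose_eq_zero_of_lt (by omega), Nat.cast_zero, zero_mul, zero_mul]
  rw [hextend, binomialTail, binomialTail, hshift, hshift, mul_sum, mul_sum, ← sum_add_distrib]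
  exact sum_congr rfl fun i _ => choose_mul_pow_mul_pow_succ_succ p k i

section

variable {Ω : Type*}

theorem measureReal_inter_le_of_condExp_indicator_le {m m0 : MeasurableSpace Ω} {P : Measure Ω}
    [IsFiniteMeasure P] (hm : m ≤ m0) {D C : Set Ω} (hD : MeasurableSet[m] D)
    (hC : MeasurableSet C) {p : ℝ}
    (hbd : ∀ᵐ ω ∂P, ω ∈ D → P[C.indicator (fun _ => (1 : ℝ))|m] ω ≤ p) :
    P.real (D ∩ C) ≤ p * P.real D := by
  calc P.real (D ∩ C) = ∫ ω in D, C.indicator (fun _ => (1 : ℝ)) ω ∂P := by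
        rw [setIntegral_indicator hC, setIntegral_const, smul_eq_mul, mul_one]
    _ = ∫ ω in D, P[C.indicator (fun _ => (1 : ℝ))|m] ω ∂P :=
        (setIntegral_condExp hm ((integrable_const 1).indicator hC) hD).symm
    _ ≤ ∫ _ in D, p ∂P :=
        setIntegral_mono_on_ae integrable_condExp.integrableOn
          (integrable_const p).integrableOn (hm _ hD) hbd
    _ = p * P.real D := by rw [setIntegral_const, smul_eq_mul, mul_comm]

theorem measureReal_inter_inter_le_of_condExp_mul_indicator_le {m m0 : MeasurableSpace Ω}
    {P : Measure Ω} [IsFiniteMeasure P] (hm : m ≤ m0) {D A C : Set Ω} (hD : MeasurableSet[m] D)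
    (hA : MeasurableSet[m] A) (hC : MeasurableSet C) {p : ℝ} (hp0 : 0 ≤ p)
    (hbd : ∀ᵐ ω ∂P,
      P[C.indicator (fun _ => (1 : ℝ))|m] ω * A.indicator (fun _ => (1 : ℝ)) ω ≤ p) :
    P.real (D ∩ (A ∩ C)) ≤ p * P.real D := by
  rw [← Set.inter_assoc]
  refine (measureReal_inter_le_of_condExp_indicator_le hm (hD.inter hA) hC ?_).trans
    (mul_le_mul_of_nonneg_left (measureReal_mono Set.inter_subset_left) hp0)
  filter_upwards [hbd] with ω hω hωDA
  simpa [Set.indicator_of_mem hωDA.2] using hω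

theorem setOf_mul_indicator_eq_one (u : Ω → ℝ) (A : Set Ω) :
    {ω | u ω * A.indicator (fun _ => (1 : ℝ)) ω = 1} = A ∩ {ω | u ω = 1} := by
  ext ω
  by_cases hω : ω ∈ A <;> simp [hω]

theorem measurable_sum_Icc_of_adapted {m : ℕ} {F : ℕ → MeasurableSpace Ω}
    (hFmono : ∀ n < m, F n ≤ F (n + 1)) {X : ℕ → Ω → ℝ}
    (hX : ∀ n, 1 ≤ n → n ≤ m → Measurable[F n] (X n)) :
    ∀ k ≤ m, Measurable[F k] (fun ω => ∑ n ∈ Icc 1 k, X n ω) := by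
  intro k hk
  induction k with
  | zero => simp [measurable_const]
  | succ k ih =>
    simp only [sum_Icc_succ_top (Nat.le_add_left 1 k)]
    exact ((ih (by omega)).mono (hFmono k (by omega)) le_rfl).add (hX (k + 1) (by omega) hk)

theorem measureReal_le_binomialTail {m0 : MeasurableSpace Ω} (P : Measure Ω)
    [IsProbabilityMeasure P] {m : ℕ} {F : ℕ → MeasurableSpace Ω}
    (hFmono : ∀ n < m, F n ≤ F (n + 1)) (hFle : ∀ n ≤ m, F n ≤ m0)
    {X : ℕ → Ω → ℝ} (hX01 : ∀ n ω, X n ω = 0 ∨ X n ω = 1)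
    (hXmeas : ∀ n, 1 ≤ n → n ≤ m → Measurable[F n] (X n)) {p : ℝ} (hp0 : 0 ≤ p) (hp1 : p ≤ 1)
    (hXbound : ∀ n, 1 ≤ n → n ≤ m → ∀ D, MeasurableSet[F (n - 1)] D →
      P.real (D ∩ {ω | X n ω = 1}) ≤ p * P.real D) :
    ∀ k ≤ m, ∀ j : ℕ, P.real {ω | (j : ℝ) ≤ ∑ n ∈ Icc 1 k, X n ω} ≤ binomialTail p k j := by
  intro k hk
  induction k with
  | zero =>
    rintro (_ | j)
    · exact binomialTail_zero_right p 0 ▸ measureReal_le_one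
    · simp [binomialTail, not_le.mpr (Nat.cast_add_one_pos j)]
  | succ k ih =>
    rintro (_ | j)
    · exact binomialTail_zero_right p (k + 1) ▸ measureReal_le_one
    set S := fun ω => ∑ n ∈ Icc 1 k, X n ω
    set B1 := {ω | ((j + 1 : ℕ) : ℝ) ≤ S ω}
    set B0 := {ω | (j : ℝ) ≤ S ω}
    have hS : Measurable[F k] S := measurable_sum_Icc_of_adapted hFmono hXmeas k (by omega)
    have hB1 : MeasurableSet[F k] B1 := measurableSet_le measurable_const hS
    have hB0 : MeasurableSet[F k] B0 := measurableSet_le measurable_const hS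
    have hB10 : B1 ⊆ B0 := fun ω hω => by
      simp only [B1, B0, Set.mem_ofPred_eq] at hω ⊢
      push_cast at hω
      linarith
    have hsplit : {ω | ((j + 1 : ℕ) : ℝ) ≤ ∑ n ∈ Icc 1 (k + 1), X n ω} ⊆
        B1 ∪ ((B0 \ B1) ∩ {ω | X (k + 1) ω = 1}) := by
      intro ω hω
      simp only [Set.mem_ofPred_eq, sum_Icc_succ_top (Nat.le_add_left 1 k)] at hω
      rcases hX01 (k + 1) ω with h0 | h1
      · left
        show _ ≤ S ω
        linarith
      · by_cases hB : ω ∈ B1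
        · exact Or.inl hB
        · refine Or.inr ⟨⟨?_, hB⟩, h1⟩
          show _ ≤ S ω
          push_cast at hω
          linarith
    have hstep := hXbound (k + 1) (by omega) hk (B0 \ B1) (hB0.diff hB1)
    rw [measureReal_sdiff hB10 (hFle k (by omega) _ hB1)] at hstep
    calc _ ≤ P.real B1 + P.real ((B0 \ B1) ∩ {ω | X (k + 1) ω = 1}) :=
          (measureReal_mono hsplit).trans (measureReal_union_le _ _)
      _ ≤ (1 - p) * P.real B1 + p * P.real B0 := by linarith
      _ ≤ (1 - p) * binomialTail p k (j + 1) + p * binomialTail p k j := by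
          have hq : 0 ≤ 1 - p := sub_nonneg.mpr hp1
          gcongr
          exacts [ih (by omega) (j + 1), ih (by omega) j]
      _ = binomialTail p (k + 1) (j + 1) := (binomialTail_succ_succ p k j).symm

end

/-- Stochastic domination by a Binomial: if `U_n` is `ℱ_n`-measurable with values in
`{0,1}`, `A_n ∈ ℱ_{n−1}`, and `P[U_n = 1 | ℱ_{n−1}]·𝟙_{A_n} ≤ p` a.s. for each
`1 ≤ n ≤ m`, then `S = Σ_{n=1}^m U_n·𝟙_{A_n}` satisfies
`P[S ≥ j] ≤ Σ_{i=j}^m C(m,i) p^i (1−p)^{m−i}` for every `0 ≤ j ≤ m`. -/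
theorem binomial_domination
    {Ω : Type*} {m0 : MeasurableSpace Ω} (P : Measure Ω) [IsProbabilityMeasure P]
    (m : ℕ) (F : ℕ → MeasurableSpace Ω)
    (hFmono : ∀ n, n < m → F n ≤ F (n + 1)) (hFle : ∀ n, n ≤ m → F n ≤ m0)
    (U : ℕ → Ω → ℝ) (hUmeas : ∀ n, 1 ≤ n → n ≤ m → Measurable[F n] (U n))
    (hU01 : ∀ n ω, U n ω = 0 ∨ U n ω = 1)
    (A : ℕ → Set Ω) (hA : ∀ n, 1 ≤ n → n ≤ m → MeasurableSet[F (n - 1)] (A n))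
    (p : ℝ) (hp0 : 0 ≤ p) (hp1 : p ≤ 1)
    (hbound : ∀ n, 1 ≤ n → n ≤ m → ∀ᵐ ω ∂P,
      (P[Set.indicator {ω' | U n ω' = 1} (fun _ => (1 : ℝ))|F (n - 1)]) ω *
        (A n).indicator (fun _ => (1 : ℝ)) ω ≤ p) :
    ∀ j ≤ m,
      P {ω | (j : ℝ) ≤ ∑ n ∈ Finset.Icc 1 m, U n ω * (A n).indicator (fun _ => (1 : ℝ)) ω} ≤
        ENNReal.ofReal
          (∑ i ∈ Finset.Icc j m, (m.choose i : ℝ) * p ^ i * (1 - p) ^ (m - i)) := by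
  intro j _
  set X : ℕ → Ω → ℝ := fun n ω => U n ω * (A n).indicator (fun _ => (1 : ℝ)) ω
  have hX01 (n : ℕ) (ω : Ω) : X n ω = 0 ∨ X n ω = 1 := by
    by_cases hω : ω ∈ A n <;> simp [X, hω, hU01 n ω]
  have hXmeas (n : ℕ) (hn1 : 1 ≤ n) (hnm : n ≤ m) : Measurable[F n] (X n) := by
    obtain ⟨k, rfl⟩ : ∃ k, n = k + 1 := ⟨n - 1, by omega⟩
    have hAk : MeasurableSet[F (k + 1)] (A (k + 1)) := hFmono k (by omega) _ (hA _ hn1 hnm)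
    exact (hUmeas _ hn1 hnm).mul (measurable_const.indicator hAk)
  have hXbound (n : ℕ) (hn1 : 1 ≤ n) (hnm : n ≤ m) (D : Set Ω)
      (hD : MeasurableSet[F (n - 1)] D) : P.real (D ∩ {ω | X n ω = 1}) ≤ p * P.real D := by
    have hU1 : MeasurableSet {ω | U n ω = 1} :=
      measurableSet_eq_fun ((hUmeas n hn1 hnm).mono (hFle n hnm) le_rfl) measurable_const
    rw [setOf_mul_indicator_eq_one]
    exact measureReal_inter_inter_le_of_condExp_mul_indicator_le (hFle _ (by omega)) hD
      (hA n hn1 hnm) hU1 hp0 (hbound n hn1 hnm)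
  rw [← ofReal_measureReal]
  exact ENNReal.ofReal_le_ofReal <| measureReal_le_binomialTail P hFmono hFle hX01 hXmeas hp0 hp1
    hXbound m le_rfl j
end

section
/- Let d ≥ 1 be an integer and let φ, ψ : ℕ → [0,∞) be nonincreasing functions. Then for every v ∈ ℤ^d: Σ_{w ∈ ℤ^d} φ(|w|)·ψ(|v − w|) ≤ Σ_{w ∈ ℤ^d} φ(|w|)·ψ(|w|), where |x| denotes the ℓ^∞ norm max_{1≤i≤d} |x_i| of x ∈ ℤ^d and both sums are understood in [0,∞]. -/
/-!
Both sides are bilinear in `(φ, ψ)`, and an antitone `φ` is a nonnegative superposition of the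
indicators of the initial segments `{n | n ≤ k}`, `k : ℕ∞`, the layer at `⊤` carrying the limit
`⨅ n, φ n`. It therefore suffices to compare, for all radii `a b : ℕ∞`, the number of points in
the ℓ∞-balls of radii `a` and `b` centred at `0` and `v` with the number for concentric balls.
Coordinatewise, `[-a, a] ∩ [v - b, v + b]` is an interval of length at most `2 min(a, b) + 1`,
so a translation moves the intersection into the ball of radius `min a b`.
-/

open scoped ENNReal

theorem ENat.tsum_eq_tsum_coe_add_top (f : ℕ∞ → ℝ≥0∞) :
    ∑' k, f k = ∑' n : ℕ, f n + f ⊤ := by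
  rw [ENNReal.tsum_eq_add_tsum_ite ⊤, add_comm]
  congr 1
  rw [← Nat.cast_injective.tsum_eq]
  · simp
  · intro k hk
    induction k using ENat.recTopCoe <;> simp_all

theorem ENNReal.tsum_sub_succ_of_antitone {f : ℕ → ℝ≥0∞} (hf : Antitone f) :
    ∑' k, (f k - f (k + 1)) = f 0 - ⨅ k, f k := by
  have partial_sum (N : ℕ) : ∑ k ∈ Finset.range N, (f k - f (k + 1)) = f 0 - f N := by
    induction N with
    | zero => simp
    | succ N ih =>
      rw [Finset.sum_range_succ, ih]
      exact tsub_add_tsub_cancel (hf N.zero_le) (hf N.le_succ)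
  rw [ENNReal.tsum_eq_iSup_nat, ENNReal.sub_iInf]
  simp only [partial_sum]

noncomputable def layer (φ : ℕ → ℝ≥0∞) : ℕ∞ → ℝ≥0∞
  | ⊤ => ⨅ n, φ n
  | (k : ℕ) => φ k - φ (k + 1)

theorem Antitone.eq_tsum_layer {φ : ℕ → ℝ≥0∞} (hφ : Antitone φ) (n : ℕ) :
    φ n = ∑' k : ℕ∞, if (n : ℕ∞) ≤ k then layer φ k else 0 := by
  -- The increments of `φ (max n ·)` are exactly the layers of `φ` above `n`.
  have hmax : Antitone fun k => φ (max n k) :=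
    hφ.comp_monotone fun _ _ h => max_le_max_left n h
  have hinf : ⨅ k, φ (max n k) = ⨅ k, φ k :=
    le_antisymm (iInf_mono fun k => hφ (le_max_right n k)) (iInf_mono' fun k => ⟨max n k, le_rfl⟩)
  have hstep (k : ℕ) : φ (max n k) - φ (max n (k + 1)) = if n ≤ k then layer φ k else 0 := by
    split_ifs with h
    · rw [max_eq_right h, max_eq_right (h.trans k.le_succ)]
      rfl
    · rw [max_eq_left (by omega), max_eq_left (by omega), tsub_self]
  rw [ENat.tsum_eq_tsum_coe_add_top]
  simp only [Nat.cast_le, le_top, if_true, ← hstep, ENNReal.tsum_sub_succ_of_antitone hmax, hinf,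
    zero_le, max_eq_left]
  exact (tsub_add_cancel_of_le (iInf_le _ n)).symm

theorem ENNReal.tsum_mul_comp_le_of_encard_inter_le {X ι κ : Type*} (α : ι → ℝ≥0∞)
    (β : κ → ℝ≥0∞) (A : ι → Set X) (B : κ → Set X) (σ : X → X)
    (h : ∀ i j, (A i ∩ σ ⁻¹' B j).encard ≤ (A i ∩ B j).encard) :
    ∑' x, (∑' i, (A i).indicator (fun _ => α i) x) * ∑' j, (B j).indicator (fun _ => β j) (σ x) ≤
      ∑' x, (∑' i, (A i).indicator (fun _ => α i) x) * ∑' j, (B j).indicator (fun _ => β j) x := by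
  have expand (τ : X → X) :
      ∑' x, (∑' i, (A i).indicator (fun _ => α i) x) * ∑' j, (B j).indicator (fun _ => β j) (τ x) =
        ∑' i, ∑' j, (A i ∩ τ ⁻¹' B j).encard * (α i * β j) := by
    calc _ = ∑' x, ∑' i, ∑' j, (A i ∩ τ ⁻¹' B j).indicator (fun _ => α i * β j) x := by
          refine tsum_congr fun x => ?_
          rw [← ENNReal.tsum_mul_right]
          refine tsum_congr fun i => ?_
          rw [← ENNReal.tsum_mul_left]
          refine tsum_congr fun j => ?_
          rw [Set.inter_indicator_mul, ← Set.indicator_comp_right]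
          rfl
      _ = ∑' i, ∑' j, ∑' x, (A i ∩ τ ⁻¹' B j).indicator (fun _ => α i * β j) x := by
          rw [ENNReal.tsum_comm]
          exact tsum_congr fun i => ENNReal.tsum_comm
      _ = _ := by
          simp only [← tsum_subtype, ENNReal.tsum_set_const]
  rw [expand σ]
  refine le_of_le_of_eq ?_ (expand id).symm
  refine ENNReal.tsum_le_tsum fun i => ENNReal.tsum_le_tsum fun j => ?_
  gcongr ?_ * _
  exact ENat.toENNReal_le.2 (h i j)

def normInfBall {d : ℕ} (r : ℕ∞) : Set (Fin d → ℤ) :=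
  {w | ((normInf w).toNat : ℕ∞) ≤ r}

theorem mem_normInfBall {d : ℕ} {r : ℕ∞} {w : Fin d → ℤ} :
    w ∈ normInfBall r ↔ ∀ i, ((w i).natAbs : ℕ∞) ≤ r := by
  induction r using ENat.recTopCoe <;> simp [normInfBall, normInf, Finset.sup_le_iff]

theorem Int.exists_natAbs_sub_le_min (a b : ℕ∞) (v : ℤ) : ∃ c : ℤ, ∀ x : ℤ,
    (x.natAbs : ℕ∞) ≤ a → ((v - x).natAbs : ℕ∞) ≤ b → ((x - c).natAbs : ℕ∞) ≤ min a b := by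
  induction a using ENat.recTopCoe with
  | top => exact ⟨v, fun x _ hb => by rw [← Int.natAbs_neg, neg_sub]; simpa using hb⟩
  | coe a =>
    induction b using ENat.recTopCoe with
    | top => exact ⟨0, fun x ha _ => by simpa using ha⟩
    | coe b =>
      -- `c` is the shift taking `[max (-a) (v - b), min a (v + b)]` into `[-min a b, min a b]`.
      refine ⟨min (a : ℤ) (v + b) - min (a : ℤ) b, fun x ha hb => ?_⟩
      norm_cast at ha hb
      exact le_min (Nat.cast_le.2 (by omega)) (Nat.cast_le.2 (by omega))

theorem encard_normInfBall_inter_preimage_sub_le {d : ℕ} (a b : ℕ∞) (v : Fin d → ℤ) :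
    (normInfBall a ∩ (v - ·) ⁻¹' normInfBall b).encard ≤
      (normInfBall a ∩ normInfBall b : Set (Fin d → ℤ)).encard := by
  choose c hc using fun i => Int.exists_natAbs_sub_le_min a b (v i)
  refine Set.encard_le_encard_of_injOn (f := (· - c)) (fun w ⟨ha, hb⟩ => ?_)
    sub_left_injective.injOn
  have hmin (i : Fin d) := hc i (w i) (mem_normInfBall.1 ha i) (mem_normInfBall.1 hb i)
  exact ⟨mem_normInfBall.2 fun i => (hmin i).trans (min_le_left a b),
    mem_normInfBall.2 fun i => (hmin i).trans (min_le_right a b)⟩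

theorem rearrangement_inequality_general (d : ℕ)
    (φ ψ : ℕ → NNReal) (hφ : Antitone φ) (hψ : Antitone ψ) (v : Fin d → ℤ) :
    (∑' w : Fin d → ℤ,
        ((φ (normInf w).toNat : ℝ≥0∞) * (ψ (normInf (v - w)).toNat : ℝ≥0∞))) ≤
      ∑' w : Fin d → ℤ,
        ((φ (normInf w).toNat : ℝ≥0∞) * (ψ (normInf w).toNat : ℝ≥0∞)) := by
  have layer_cake {f : ℕ → NNReal} (hf : Antitone f) (w : Fin d → ℤ) :
      (f (normInf w).toNat : ℝ≥0∞) =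
        ∑' k, (normInfBall k).indicator (fun _ => layer (f ·) k) w := by
    rw [Antitone.eq_tsum_layer (φ := fun n => (f n : ℝ≥0∞))
      (fun _ _ h => ENNReal.coe_le_coe.2 (hf h))]
    simp only [Set.indicator_apply, normInfBall, Set.mem_ofPred_eq]
  simp only [layer_cake hφ, layer_cake hψ]
  exact ENNReal.tsum_mul_comp_le_of_encard_inter_le _ _ _ _ (v - ·)
    fun a b => encard_normInfBall_inter_preimage_sub_le a b v

/-- Discrete rearrangement-type inequality: for radially nonincreasing nonnegative
`φ(|·|)`, `ψ(|·|)` on ℤ^d (ℓ∞ norm), the "convolution" `Σ_w φ(|w|)ψ(|v−w|)` is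
maximized at `v = 0`.  The sums are taken in `[0,∞]`. -/
theorem rearrangement_inequality (d : ℕ) (hd : 1 ≤ d)
    (φ ψ : ℕ → NNReal) (hφ : Antitone φ) (hψ : Antitone ψ) (v : Fin d → ℤ) :
    (∑' w : Fin d → ℤ,
        ((φ (normInf w).toNat : ℝ≥0∞) * (ψ (normInf (v - w)).toNat : ℝ≥0∞))) ≤
      ∑' w : Fin d → ℤ,
        ((φ (normInf w).toNat : ℝ≥0∞) * (ψ (normInf w).toNat : ℝ≥0∞)) :=
  rearrangement_inequality_general d φ ψ hφ hψ v
end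

section
/- Let M ≥ 1 be an integer and let B_1, …, B_M be {0,1}-valued random variables on a common probability space (not assumed independent). Let a ∈ [0,1] and let (b_k)_{k≥1} be numbers in [0,1] such that P[B_1 = 1] ≤ a and, for every integer i ≥ 2, P[B_i = 1] ≤ b_{⌊log₂ i⌋}. Let W = Σ_{i=1}^M B_i. Then: (i) P[W + 𝟙{W > 0} ≥ 2] ≤ a + Σ_{k=1}^∞ 2^k·b_k; and (ii) for every integer i ≥ 3: P[W + 𝟙{W > 0} ≥ i] ≤ Σ_{k=⌊log₂(i−1)⌋}^∞ 2^k·b_k. -/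
open MeasureTheory
open scoped ENNReal

/-!
If `W + 𝟙{W > 0} ≥ i ≥ 2` then `W ≥ i - 1`; as only `i - 2` of the indicators have index below
`i - 1`, some `B_j` with `j ≥ i - 1` fires. A union bound leaves `∑_{j ≥ i - 1} b_{⌊log₂ j⌋}`,
and each dyadic block `[2^k, 2^(k+1))` contributes at most `2^k b_k` to it.
-/

open Finset

theorem Nat.card_filter_log_two_eq_le (S : Finset ℕ) (hS : 0 ∉ S) (k : ℕ) :
    #{j ∈ S | Nat.log 2 j = k} ≤ 2 ^ k := by
  have hsub : {j ∈ S | Nat.log 2 j = k} ⊆ Ico (2 ^ k) (2 ^ (k + 1)) := by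
    intro j hj
    obtain ⟨hjS, rfl⟩ := mem_filter.mp hj
    have hj0 : j ≠ 0 := fun h => hS (h ▸ hjS)
    exact mem_Ico.mpr ⟨Nat.pow_log_le_self 2 hj0, Nat.lt_pow_succ_log_self one_lt_two j⟩
  calc #{j ∈ S | Nat.log 2 j = k} ≤ #(Ico (2 ^ k) (2 ^ (k + 1))) := card_le_card hsub
    _ = 2 ^ k := by rw [Nat.card_Ico, pow_succ]; omega

theorem ENNReal.sum_comp_log_two_le_tsum (c : ℕ → ℝ≥0∞) {S : Finset ℕ} {n : ℕ} (hn : 1 ≤ n)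
    (hS : ∀ j ∈ S, n ≤ j) :
    ∑ j ∈ S, c (Nat.log 2 j) ≤ ∑' k, if Nat.log 2 n ≤ k then 2 ^ k * c k else 0 := by
  have hS0 : 0 ∉ S := fun h => by have := hS 0 h; omega
  rw [sum_comp]
  calc ∑ k ∈ S.image (Nat.log 2), #{j ∈ S | Nat.log 2 j = k} • c k
      ≤ ∑ k ∈ S.image (Nat.log 2), if Nat.log 2 n ≤ k then 2 ^ k * c k else 0 := by
        refine sum_le_sum fun k hk => ?_
        obtain ⟨j, hj, rfl⟩ := mem_image.mp hk
        rw [if_pos (Nat.log_mono_right (hS j hj)), nsmul_eq_mul]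
        gcongr
        exact_mod_cast Nat.card_filter_log_two_eq_le S hS0 _
    _ ≤ _ := ENNReal.sum_le_tsum _

theorem Nat.exists_mem_Icc_ne_zero_of_le_sum {f : ℕ → ℕ} (hf : ∀ j, f j ≤ 1) {n M : ℕ}
    (hn : 1 ≤ n) (h : n ≤ ∑ j ∈ Icc 1 M, f j) : ∃ j ∈ Icc n M, f j ≠ 0 := by
  by_contra! hzero
  have hle : ∑ j ∈ Icc 1 M, f j ≤ ∑ j ∈ Ico 1 n, 1 := by
    calc ∑ j ∈ Icc 1 M, f j = ∑ j ∈ Icc 1 M with j < n, f j := by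
          refine (sum_filter_of_ne fun j hj hfj => ?_).symm
          by_contra! hjn
          exact hfj (hzero j (mem_Icc.mpr ⟨hjn, (mem_Icc.mp hj).2⟩))
      _ ≤ ∑ j ∈ Icc 1 M with j < n, 1 := sum_le_sum fun j _ => hf j
      _ ≤ ∑ j ∈ Ico 1 n, 1 := sum_le_sum_of_subset fun j hj => by
          simp only [mem_filter, mem_Icc, mem_Ico] at hj ⊢; omega
  simp only [sum_const, Nat.card_Ico, smul_eq_mul, mul_one] at hle
  omega

theorem measure_le_sum_add_ite_le {Ω : Type*} [MeasurableSpace Ω] (P : Measure Ω)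
    {B : ℕ → Ω → ℕ} (hB : ∀ j ω, B j ω = 0 ∨ B j ω = 1) (M : ℕ) {i : ℕ} (hi : 2 ≤ i) :
    P {ω | i ≤ (∑ j ∈ Icc 1 M, B j ω) + if 0 < ∑ j ∈ Icc 1 M, B j ω then 1 else 0} ≤
      ∑ j ∈ Icc (i - 1) M, P {ω | B j ω = 1} := by
  refine (measure_mono fun ω hω => ?_).trans (measure_biUnion_finset_le _ _)
  have hW : i - 1 ≤ ∑ j ∈ Icc 1 M, B j ω := by
    simp only [Set.mem_ofPred_eq] at hω; split_ifs at hω <;> omega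
  obtain ⟨j, hj, hBj⟩ := Nat.exists_mem_Icc_ne_zero_of_le_sum
    (fun j => (hB j ω).elim (·.le.trans zero_le_one) (·.le)) (by omega) hW
  exact Set.mem_biUnion hj ((hB j ω).resolve_left hBj)

theorem tail_bound_endangered_sum_general
    {Ω : Type*} [MeasurableSpace Ω] (P : Measure Ω)
    (M : ℕ) (B : ℕ → Ω → ℕ) (hB01 : ∀ i ω, B i ω = 0 ∨ B i ω = 1) (a : ℝ) (b : ℕ → ℝ)
    (hB1 : P {ω | B 1 ω = 1} ≤ ENNReal.ofReal a)
    (hBi : ∀ i, 2 ≤ i → i ≤ M →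
      P {ω | B i ω = 1} ≤ ENNReal.ofReal (b (Nat.log 2 i))) :
    (P {ω | 2 ≤ (∑ i ∈ Finset.Icc 1 M, B i ω) +
          (if 0 < ∑ i ∈ Finset.Icc 1 M, B i ω then 1 else 0)} ≤
        ENNReal.ofReal a + ∑' k : ℕ, 2 ^ (k + 1) * ENNReal.ofReal (b (k + 1))) ∧
    (∀ i : ℕ, 3 ≤ i →
      P {ω | i ≤ (∑ n ∈ Finset.Icc 1 M, B n ω) +
          (if 0 < ∑ n ∈ Finset.Icc 1 M, B n ω then 1 else 0)} ≤
        ∑' k : ℕ, if Nat.log 2 (i - 1) ≤ k then 2 ^ k * ENNReal.ofReal (b k) else 0) := by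
  have hsum : ∀ n, 2 ≤ n → ∑ j ∈ Icc n M, P {ω | B j ω = 1} ≤
      ∑' k, if Nat.log 2 n ≤ k then 2 ^ k * ENNReal.ofReal (b k) else 0 := fun n hn =>
    (sum_le_sum fun j hj => hBi j (hn.trans (mem_Icc.mp hj).1) (mem_Icc.mp hj).2).trans
      (ENNReal.sum_comp_log_two_le_tsum _ (by omega) fun j hj => (mem_Icc.mp hj).1)
  refine ⟨?_, fun i hi =>
    (measure_le_sum_add_ite_le P hB01 M (by omega)).trans (hsum (i - 1) (by omega))⟩
  calc _ ≤ ∑ j ∈ Icc 1 M, P {ω | B j ω = 1} := measure_le_sum_add_ite_le P hB01 M le_rfl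
    _ ≤ ∑ j ∈ insert 1 (Icc 2 M), P {ω | B j ω = 1} := sum_le_sum_of_subset fun j hj => by
        simp only [mem_insert, mem_Icc] at hj ⊢; omega
    _ ≤ ENNReal.ofReal a + ∑' k, if 1 ≤ k then 2 ^ k * ENNReal.ofReal (b k) else 0 := by
        rw [sum_insert (by simp)]
        exact add_le_add hB1 (hsum 2 le_rfl)
    _ = _ := by rw [tsum_eq_zero_add' ENNReal.summable]; simp

/-- Tail bounds for `W + 𝟙{W > 0}` where `W = Σ_{i=1}^M B_i` is a sum of (not
necessarily independent) `{0,1}`-valued random variables with `P[B_1 = 1] ≤ a` and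
`P[B_i = 1] ≤ b_{⌊log₂ i⌋}` for `2 ≤ i ≤ M`:
(i) `P[W + 𝟙{W>0} ≥ 2] ≤ a + Σ_{k≥1} 2^k b_k`;
(ii) for every `i ≥ 3`, `P[W + 𝟙{W>0} ≥ i] ≤ Σ_{k ≥ ⌊log₂(i−1)⌋} 2^k b_k`. -/
theorem tail_bound_endangered_sum
    {Ω : Type*} [MeasurableSpace Ω] (P : Measure Ω) [IsProbabilityMeasure P]
    (M : ℕ) (hM : 1 ≤ M) (B : ℕ → Ω → ℕ)
    (hBmeas : ∀ i, Measurable (B i)) (hB01 : ∀ i ω, B i ω = 0 ∨ B i ω = 1)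
    (a : ℝ) (ha : a ∈ Set.Icc (0 : ℝ) 1)
    (b : ℕ → ℝ) (hb : ∀ k, b k ∈ Set.Icc (0 : ℝ) 1)
    (hB1 : P {ω | B 1 ω = 1} ≤ ENNReal.ofReal a)
    (hBi : ∀ i, 2 ≤ i → i ≤ M →
      P {ω | B i ω = 1} ≤ ENNReal.ofReal (b (Nat.log 2 i))) :
    (P {ω | 2 ≤ (∑ i ∈ Finset.Icc 1 M, B i ω) +
          (if 0 < ∑ i ∈ Finset.Icc 1 M, B i ω then 1 else 0)} ≤
        ENNReal.ofReal a + ∑' k : ℕ, 2 ^ (k + 1) * ENNReal.ofReal (b (k + 1))) ∧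
    (∀ i : ℕ, 3 ≤ i →
      P {ω | i ≤ (∑ n ∈ Finset.Icc 1 M, B n ω) +
          (if 0 < ∑ n ∈ Finset.Icc 1 M, B n ω then 1 else 0)} ≤
        ∑' k : ℕ, if Nat.log 2 (i - 1) ≤ k then 2 ^ k * ENNReal.ofReal (b k) else 0) :=
  tail_bound_endangered_sum_general P M B hB01 a b hB1 hBi
end
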